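/- arXiv:1706.08423 — 10 statements merged into one kernel-verified Lean document; each statement's English description precedes it below -/
import Mathlib

section
/- Let p be a prime number. If 2p = (q^d - 1)/(q - 1) for some prime power q and some integer d ≥ 2, then d = 2. -/
/-!
Proof idea: if `q` were even, `1 + q + ⋯ + q^(d-1)` would be odd, so `q` is odd and the sum has the
parity of `d`; hence `d = 2m`. Pairing terms gives `2p = (1 + q)(1 + q² + ⋯ + q^(2(m-1)))`, and since
`(1 + q)/2 ≥ 2` divides the prime `p`, the second factor is `1`, i.e. `m = 1`.
-/

open Finset

theorem Even.odd_geom_sum {q n : ℕ} (hq : Even q) (hn : n ≠ 0) :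
    Odd (∑ i ∈ range n, q ^ i) := by
  rw [← ZMod.natCast_eq_one_iff_odd, ← ZMod.natCast_eq_zero_iff_even] at *
  push_cast
  simp [hq, zero_geom_sum, hn]

theorem Odd.even_geom_sum_iff {q : ℕ} (hq : Odd q) (n : ℕ) :
    Even (∑ i ∈ range n, q ^ i) ↔ Even n := by
  rw [← ZMod.natCast_eq_one_iff_odd] at hq
  rw [← ZMod.natCast_eq_zero_iff_even, ← ZMod.natCast_eq_zero_iff_even]
  push_cast
  rw [hq, one_geom_sum]

theorem geom_sum_two_mul {R : Type*} [CommSemiring R] (x : R) (m : ℕ) :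
    ∑ i ∈ range (2 * m), x ^ i = (1 + x) * ∑ i ∈ range m, (x ^ 2) ^ i := by
  induction m with
  | zero => simp
  | succ m ih =>
    rw [Nat.mul_succ, sum_range_succ, sum_range_succ, ih, sum_range_succ]
    ring

theorem Nat.eq_one_of_geom_sum_eq_one {x n : ℕ} (hx : x ≠ 0) (h : ∑ i ∈ range n, x ^ i = 1) :
    n = 1 := by
  have hn : n ≤ ∑ i ∈ range n, x ^ i := by
    simpa using card_nsmul_le_sum (range n) (x ^ ·) 1 fun i _ => Nat.one_le_pow _ _ hx.bot_lt
  have hn0 : n ≠ 0 := by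
    rintro rfl
    simp at h
  omega

/-- If `p` is prime, `q` is a prime power and `2p = 1 + q + ⋯ + q^(d-1)` with `d ≥ 2`,
then `d = 2`. -/
theorem two_p_eq_geom_sum_imp_d_eq_two (p q d : ℕ) (hp : p.Prime) (hq : IsPrimePow q)
    (hd : 2 ≤ d) (h : 2 * p = ∑ i ∈ Finset.range d, q ^ i) : d = 2 := by
  have h_even : Even (∑ i ∈ range d, q ^ i) := h ▸ even_two_mul p
  have hq_odd : Odd q := by
    by_contra hq_even
    exact Nat.not_even_iff_odd.mpr
      ((Nat.not_odd_iff_even.mp hq_even).odd_geom_sum (by omega)) h_even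
  obtain ⟨m, rfl⟩ : 2 ∣ d := even_iff_two_dvd.mp <| (hq_odd.even_geom_sum_iff d).mp h_even
  obtain ⟨k, rfl⟩ := hq_odd
  have hk : k ≠ 0 := by
    rintro rfl
    exact hq.ne_one rfl
  rw [geom_sum_two_mul, show 1 + (2 * k + 1) = 2 * (k + 1) by ring, mul_assoc,
    Nat.mul_left_cancel_iff two_pos] at h
  have hkp : k + 1 = p := ((Nat.dvd_prime hp).mp (Dvd.intro _ h.symm)).resolve_left (by omega)
  have hsum : ∑ i ∈ range m, ((2 * k + 1) ^ 2) ^ i = 1 := by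
    rw [hkp] at h
    exact (Nat.mul_eq_left hp.ne_zero).mp h.symm
  simp [Nat.eq_one_of_geom_sum_eq_one (by positivity) hsum]
end

section
/- Let z = (a_1, ..., a_r) be a partition of a natural number n, and suppose there exists some 1 ≤ i ≤ n/2 that is not a partial sum of z (i.e., not expressible as a sum of a subset of the parts). Let i be the minimal such number. Then there is a subset of the parts summing to exactly i - 1, and every part of z not in this subset has length at least i + 1. -/
/-!
Let `s` be the multiset of parts smaller than `i`. Every `j < i` is a partial sum of `s`, since its
witness only uses parts `≤ j`; in particular `i - 1 ≤ s.sum`. Conversely `s.sum < i`: otherwise remove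
least parts from `s` as long as the sum stays `≥ i`. This ends at some `u` with least part `a` such
that `w := u.erase a` has `w.sum < i < w.sum + a`, so `i - w.sum < a` is a partial sum realised by
parts below `a`, disjoint from `w`, and together with `w` they realise `i`. The parts outside `s` are
`≥ i`, and none equals `i` because `i` is not a partial sum.
-/

/-- `k` is a partial sum of the multiset `z` if some sub-multiset of `z` sums to `k`. -/
def IsPartialSum (z : Multiset ℕ) (k : ℕ) : Prop := ∃ s, s ≤ z ∧ s.sum = k

theorem Multiset.add_le_of_forall_of_forall_not {α : Type*} {p : α → Prop} [DecidablePred p]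
    {t w z : Multiset α} (ht : t ≤ z) (hw : w ≤ z) (htp : ∀ b ∈ t, p b) (hwp : ∀ c ∈ w, ¬p c) :
    t + w ≤ z := by
  rw [← Multiset.filter_add_not p z]
  exact add_le_add (Multiset.le_filter.2 ⟨ht, htp⟩) (Multiset.le_filter.2 ⟨hw, hwp⟩)

namespace IsPartialSum

variable {z : Multiset ℕ} {k : ℕ}

theorem zero (z : Multiset ℕ) : IsPartialSum z 0 :=
  ⟨0, Multiset.zero_le z, Multiset.sum_zero⟩

theorem of_mem (hk : k ∈ z) : IsPartialSum z k :=
  ⟨{k}, Multiset.singleton_le.2 hk, Multiset.sum_singleton k⟩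

theorem le_sum (h : IsPartialSum z k) : k ≤ z.sum := by
  obtain ⟨s, hs, rfl⟩ := h
  obtain ⟨u, rfl⟩ := Multiset.le_iff_exists_add.1 hs
  simp

theorem filter_lt {i : ℕ} (h : IsPartialSum z k) (hk : k < i) :
    IsPartialSum (z.filter (· < i)) k := by
  obtain ⟨s, hs, rfl⟩ := h
  exact ⟨s, Multiset.le_filter.2 ⟨hs, fun b hb => (Multiset.le_sum_of_mem hb).trans_lt hk⟩, rfl⟩

theorem of_le_sum {i : ℕ} (hlt : ∀ j < i, IsPartialSum z j) {u : Multiset ℕ} (huz : u ≤ z)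
    (hui : ∀ a ∈ u, a ≤ i) (hsum : i ≤ u.sum) : IsPartialSum z i := by
  classical
  induction u using Multiset.strongInductionOn with
  | ih u ih =>
    rcases hsum.eq_or_lt with heq | hlt_sum
    · exact ⟨u, huz, heq.symm⟩
    have hu : u ≠ 0 := by rintro rfl; simp at hlt_sum
    obtain ⟨a, hau, hmin⟩ := Multiset.exists_min_image id hu
    set w := u.erase a
    have hwu : w ≤ u := Multiset.erase_le a u
    have hsum_u : a + w.sum = u.sum := by rw [← Multiset.sum_cons, Multiset.cons_erase hau]
    rcases le_or_gt i w.sum with hw | hw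
    · exact ih w (Multiset.erase_lt.2 hau) (hwu.trans huz)
        (fun b hb => hui b (Multiset.mem_of_le hwu hb)) hw
    obtain ⟨t, htz, hts⟩ := hlt (i - w.sum) (by have := hui a hau; omega)
    have hta : ∀ b ∈ t, b < a := fun b hb => by
      have := Multiset.le_sum_of_mem hb
      omega
    have haw : ∀ c ∈ w, ¬c < a := fun c hc => not_lt.2 (hmin c (Multiset.mem_of_mem_erase hc))
    refine ⟨t + w, Multiset.add_le_of_forall_of_forall_not htz (hwu.trans huz) hta haw, ?_⟩
    rw [Multiset.sum_add]
    omega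

end IsPartialSum

theorem minimal_non_partial_sum_general (z : Multiset ℕ) (i : ℕ)
    (hps : ¬ IsPartialSum z i) (hmin : ∀ j, 1 ≤ j → j < i → IsPartialSum z j) :
    ∃ s, s ≤ z ∧ s.sum = i - 1 ∧ ∀ a ∈ z - s, i + 1 ≤ a := by
  have hlt : ∀ j < i, IsPartialSum z j := fun j hj =>
    j.eq_zero_or_pos.elim (fun h => h ▸ IsPartialSum.zero z) (hmin j · hj)
  have hi : i ≠ 0 := by rintro rfl; exact hps (IsPartialSum.zero z)
  set s := z.filter (· < i)
  have hsum_lt : s.sum < i := by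
    by_contra! h
    exact hps (IsPartialSum.of_le_sum hlt (Multiset.filter_le _ z)
      (fun a ha => (Multiset.mem_filter.1 ha).2.le) h)
  have hsum_ge : i - 1 ≤ s.sum := ((hlt (i - 1) (by omega)).filter_lt (by omega)).le_sum
  have hrest : z - s = z.filter (¬ · < i) :=
    tsub_eq_of_eq_add_rev (Multiset.filter_add_not (· < i) z).symm
  refine ⟨s, Multiset.filter_le _ z, by omega, fun a ha => ?_⟩
  rw [hrest, Multiset.mem_filter] at ha
  have hai : a ≠ i := by rintro rfl; exact hps (IsPartialSum.of_mem ha.1)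
  omega

/-- If `i` is minimal in `[1, n/2]` not a partial sum of the partition `z` of `n`, then some
sub-multiset of parts sums to `i - 1` and every remaining part is at least `i + 1`. -/
theorem minimal_non_partial_sum (n : ℕ) (z : Multiset ℕ) (hz : ∀ a ∈ z, 0 < a)
    (hsum : z.sum = n) (i : ℕ) (hi1 : 1 ≤ i) (hi2 : i ≤ n / 2)
    (hps : ¬ IsPartialSum z i) (hmin : ∀ j, 1 ≤ j → j < i → IsPartialSum z j) :
    ∃ s, s ≤ z ∧ s.sum = i - 1 ∧ ∀ a ∈ z - s, i + 1 ≤ a :=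
  minimal_non_partial_sum_general z i hps hmin
end

section
/- Let n ≡ 1 (mod 3) and let z be the partition of n consisting of one part equal to 1 and (n-1)/3 parts equal to 3. Then an integer i with 1 ≤ i ≤ n is a partial sum of z if and only if i is not congruent to 2 modulo 3. Consequently, for any two positive integers a_1, a_2 with a_1 + a_2 ≤ n, at least one of a_1, a_2, a_1 + a_2 is a partial sum of z. -/
lemma isPartialSum_cons_iff {x k : ℕ} {z : Multiset ℕ} :
    IsPartialSum (x ::ₘ z) k ↔ IsPartialSum z k ∨ ∃ j, IsPartialSum z j ∧ x + j = k := by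
  simp only [IsPartialSum, ← Multiset.mem_powerset, Multiset.powerset_cons, Multiset.mem_add,
    Multiset.mem_map, or_and_right, exists_or]
  constructor
  · rintro (h | ⟨_, ⟨s, hs, rfl⟩, rfl⟩)
    · exact .inl h
    · exact .inr ⟨s.sum, ⟨s, hs, rfl⟩, (Multiset.sum_cons x s).symm⟩
  · rintro (h | ⟨_, ⟨s, hs, rfl⟩, rfl⟩)
    · exact .inl h
    · exact .inr ⟨x ::ₘ s, ⟨s, hs, rfl⟩, Multiset.sum_cons x s⟩

lemma isPartialSum_replicate_iff {m a k : ℕ} :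
    IsPartialSum (Multiset.replicate m a) k ↔ ∃ j ≤ m, j * a = k := by
  simp only [IsPartialSum, Multiset.le_replicate_iff]
  constructor
  · rintro ⟨_, ⟨j, hj, rfl⟩, rfl⟩
    exact ⟨j, hj, by simp⟩
  · rintro ⟨j, hj, rfl⟩
    exact ⟨_, ⟨j, hj, rfl⟩, by simp⟩

lemma isPartialSum_one_cons_replicate_three_iff {m k : ℕ} :
    IsPartialSum (1 ::ₘ Multiset.replicate m 3) k ↔ k ≤ 3 * m + 1 ∧ k % 3 ≠ 2 := by
  simp only [isPartialSum_cons_iff, isPartialSum_replicate_iff]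
  constructor
  · rintro (⟨j, hj, rfl⟩ | ⟨_, ⟨j, hj, rfl⟩, rfl⟩) <;> omega
  · rintro ⟨hk, hk3⟩
    rcases (by omega : k % 3 = 0 ∨ k % 3 = 1) with h | h
    · exact .inl ⟨k / 3, by omega, by omega⟩
    · exact .inr ⟨k - 1, ⟨k / 3, by omega, by omega⟩, by omega⟩

/-- For `n ≡ 1 (mod 3)` and `z = (1, 3^((n-1)/3))`: an `i ∈ [1, n]` is a partial sum of `z`
iff `i ≢ 2 (mod 3)`; consequently, for positive `a₁, a₂` with `a₁ + a₂ ≤ n`, at least one of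
`a₁`, `a₂`, `a₁ + a₂` is a partial sum of `z`. -/
theorem partial_sums_one_threes (n : ℕ) (hn : n % 3 = 1) :
    (∀ i, 1 ≤ i → i ≤ n →
      (IsPartialSum (1 ::ₘ Multiset.replicate ((n - 1) / 3) 3) i ↔ ¬ i % 3 = 2)) ∧
    (∀ a₁ a₂ : ℕ, 0 < a₁ → 0 < a₂ → a₁ + a₂ ≤ n →
      IsPartialSum (1 ::ₘ Multiset.replicate ((n - 1) / 3) 3) a₁ ∨
      IsPartialSum (1 ::ₘ Multiset.replicate ((n - 1) / 3) 3) a₂ ∨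
      IsPartialSum (1 ::ₘ Multiset.replicate ((n - 1) / 3) 3) (a₁ + a₂)) := by
  obtain ⟨m, rfl⟩ : ∃ m, n = 3 * m + 1 := ⟨n / 3, by omega⟩
  rw [show (3 * m + 1 - 1) / 3 = m by omega]
  simp only [isPartialSum_one_cons_replicate_three_iff]
  refine ⟨fun i _ hi => and_iff_right hi, fun a₁ a₂ _ _ hle => ?_⟩
  -- if `a₁ ≡ a₂ ≡ 2 (mod 3)` then `a₁ + a₂ ≡ 1 (mod 3)`
  omega
end

section
/- Let n ≥ 4 be a square and let g = ((σ_1, σ_2), τ) be an element of S_√n ≀ S_2 in its product action on a set of size n. If the cycle type of g (as a permutation of the n points) has an odd part of length at least √n + 1, then τ = 1. -/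
/-!
If `τ ≠ 1` then `g` acts by `(x, y) ↦ (σ₂ y, σ₁ x)`, and every odd power of it is again of the
shape `(x, y) ↦ (f y, h x)`. Such a map has at most `m` fixed points, since a fixed point `(x, y)` is
determined by `y` via `x = f y`. On the other hand, an orbit of length `b` consists of `b` fixed
points of `g ^ b`; for odd `b` this forces `b ≤ m`.
-/

/-- The full cycle type of a permutation: the multiset of lengths of the orbits,
i.e. the usual cycle type together with one part `1` for each fixed point. -/
def fullCycleType {α : Type*} [Fintype α] [DecidableEq α] (g : Equiv.Perm α) :
    Multiset ℕ :=
  g.cycleType + Multiset.replicate (Fintype.card {x // g x = x}) 1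

open Finset

def IsTwisted {X : Type*} (F : X × X → X × X) : Prop :=
  ∃ f h : X → X, ∀ p, F p = (f p.2, h p.1)

namespace IsTwisted

variable {X : Type*}

theorem comp₃ {F G H : X × X → X × X} (hF : IsTwisted F) (hG : IsTwisted G)
    (hH : IsTwisted H) : IsTwisted (F ∘ G ∘ H) := by
  obtain ⟨f₁, f₂, hF⟩ := hF
  obtain ⟨g₁, g₂, hG⟩ := hG
  obtain ⟨h₁, h₂, hH⟩ := hH
  exact ⟨f₁ ∘ g₂ ∘ h₁, f₂ ∘ g₁ ∘ h₂, fun p => by simp only [Function.comp_apply, hH, hG, hF]⟩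

theorem pow_of_odd {g : Equiv.Perm (X × X)} (hg : IsTwisted g) {k : ℕ} (hk : Odd k) :
    IsTwisted ⇑(g ^ k) := by
  obtain ⟨j, rfl⟩ := hk
  induction j with
  | zero => simpa using hg
  | succ j ih =>
    rw [show 2 * (j + 1) + 1 = 1 + 1 + (2 * j + 1) by ring, pow_add, pow_add, pow_one,
      Equiv.Perm.coe_mul, Equiv.Perm.coe_mul]
    exact hg.comp₃ hg ih

theorem card_le_of_forall_apply_eq_self [Fintype X] {F : X × X → X × X} (hF : IsTwisted F)
    {s : Finset (X × X)} (hs : ∀ p ∈ s, F p = p) : #s ≤ Fintype.card X := by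
  obtain ⟨f, h, hF⟩ := hF
  have hsnd_inj : Set.InjOn Prod.snd (s : Set (X × X)) := by
    intro p hp q hq hpq
    have hp₁ : f p.2 = p.1 := congrArg Prod.fst ((hF p).symm.trans (hs p hp))
    have hq₁ : f q.2 = q.1 := congrArg Prod.fst ((hF q).symm.trans (hs q hq))
    exact Prod.ext (by rw [← hp₁, ← hq₁, hpq]) hpq
  simpa using card_le_card_of_injOn Prod.snd (fun _ _ => mem_univ _) hsnd_inj

end IsTwisted

theorem exists_card_eq_forall_pow_apply_eq_self_of_mem_fullCycleType {α : Type*} [Fintype α]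
    [DecidableEq α] {g : Equiv.Perm α} {b : ℕ} (hb : b ∈ fullCycleType g) :
    ∃ s : Finset α, #s = b ∧ ∀ x ∈ s, (g ^ b) x = x := by
  rcases Multiset.mem_add.mp hb with hcyc | hfix
  · obtain ⟨c, hc, rfl⟩ : ∃ c ∈ g.cycleFactorsFinset, #c.support = b := by
      simpa [Equiv.Perm.cycleType_def] using hcyc
    refine ⟨c.support, rfl, fun x hx => ?_⟩
    rw [← g.pow_mod_card_support_cycleOf_self_apply, ← Equiv.Perm.cycle_is_cycleOf hx hc,
      Nat.mod_self, pow_zero, Equiv.Perm.one_apply]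
  · obtain ⟨hpos, rfl⟩ := Multiset.mem_replicate.mp hfix
    obtain ⟨⟨x, hx⟩⟩ := Fintype.card_pos_iff.mp (Nat.pos_of_ne_zero hpos)
    exact ⟨{x}, card_singleton x, by simpa using hx⟩

theorem wreath_odd_long_cycle_implies_untwisted_general (X : Type*) [Fintype X] [DecidableEq X]
    (m : ℕ) (hm : Fintype.card X = m) (σ₁ σ₂ : Equiv.Perm X)
    (τ : Equiv.Perm (Fin 2)) (g : Equiv.Perm (X × X))
    (hg : ∀ p : X × X, g p = if τ = 1 then (σ₁ p.1, σ₂ p.2) else (σ₂ p.2, σ₁ p.1))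
    (hodd : ∃ b ∈ fullCycleType g, Odd b ∧ m + 1 ≤ b) :
    τ = 1 := by
  by_contra hτ
  have hg_twisted : IsTwisted g := ⟨σ₂, σ₁, fun p => by rw [hg p, if_neg hτ]⟩
  obtain ⟨b, hb, hb_odd, hmb⟩ := hodd
  obtain ⟨s, rfl, hs⟩ := exists_card_eq_forall_pow_apply_eq_self_of_mem_fullCycleType hb
  have := (hg_twisted.pow_of_odd hb_odd).card_le_of_forall_apply_eq_self hs
  omega

/-- If an element `g = ((σ₁, σ₂), τ)` of `S_√n ≀ S_2` in its product action on `n = m²`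
points has an odd part of length at least `√n + 1` in its cycle type, then `τ = 1`. -/
theorem wreath_odd_long_cycle_implies_untwisted (X : Type*) [Fintype X] [DecidableEq X]
    (m : ℕ) (hm : Fintype.card X = m) (h4 : 4 ≤ m * m) (σ₁ σ₂ : Equiv.Perm X)
    (τ : Equiv.Perm (Fin 2)) (g : Equiv.Perm (X × X))
    (hg : ∀ p : X × X, g p = if τ = 1 then (σ₁ p.1, σ₂ p.2) else (σ₂ p.2, σ₁ p.1))
    (hodd : ∃ b ∈ fullCycleType g, Odd b ∧ m + 1 ≤ b) :
    τ = 1 :=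
  wreath_odd_long_cycle_implies_untwisted_general X m hm σ₁ σ₂ τ g hg hodd
end

section
/- Let n ≥ 4 be a square and let g = ((σ_1, σ_2), 1) be an element of S_√n × S_√n acting coordinatewise on X × X with |X| = √n. If every integer i with 1 ≤ i ≤ √n - 1 is a partial sum of the cycle type of g, then every integer i with 1 ≤ i ≤ 2√n - 1 is a partial sum of the cycle type of g. -/
open Finset Function Equiv

theorem Multiset.sum_le_sum_of_le {M : Type*} [AddCommMonoid M] [PartialOrder M]
    [CanonicallyOrderedAdd M] {s t : Multiset M} (h : s ≤ t) : s.sum ≤ t.sum := by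
  obtain ⟨u, rfl⟩ := Multiset.le_iff_exists_add.mp h
  simp [Multiset.sum_add]

namespace IsPartialSum

variable {z : Multiset ℕ} {k : ℕ}

theorem le_sum_filter_le (h : IsPartialSum z k) : k ≤ (z.filter (· ≤ k)).sum := by
  obtain ⟨s, hs, rfl⟩ := h
  have hle : s ≤ z.filter (· ≤ s.sum) :=
    Multiset.le_filter.mpr ⟨hs, fun b hb => Multiset.le_sum_of_mem hb⟩
  exact Multiset.sum_le_sum_of_le hle

theorem one_mem (h : IsPartialSum z 1) : 1 ∈ z := by
  obtain ⟨s, hs, hsum⟩ := h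
  obtain ⟨a, ha, ha0⟩ : ∃ a ∈ s, a ≠ 0 := by
    by_contra! h0
    simp [Multiset.sum_eq_zero h0] at hsum
  have : a ≤ 1 := hsum ▸ Multiset.le_sum_of_mem ha
  obtain rfl : a = 1 := by omega
  exact Multiset.mem_of_le hs ha

end IsPartialSum

theorem isPartialSum_of_forall_le_sum_filter_le {z : Multiset ℕ} {k : ℕ}
    (hz : ∀ t, 1 ≤ t → t ≤ k → t ≤ (z.filter (· ≤ t)).sum) : IsPartialSum z k := by
  induction k using Nat.strong_induction_on generalizing z with
  | _ k ih =>
  rcases Nat.eq_zero_or_pos k with rfl | hk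
  · exact ⟨0, Multiset.zero_le _, rfl⟩
  have hk_le : k ≤ (z.filter (· ≤ k)).sum := hz k hk le_rfl
  -- greedy step: remove the largest part `a ≤ k` and recurse on `k - a`
  obtain ⟨a, ha, hmax⟩ :
      ∃ a ∈ (z.filter (· ≤ k)).toFinset, ∀ b ∈ (z.filter (· ≤ k)).toFinset, b ≤ a := by
    refine Finset.exists_max_image _ id (Multiset.toFinset_nonempty.mpr ?_)
    intro h0
    simp [h0] at hk_le
    omega
  simp only [Multiset.mem_toFinset, Multiset.mem_filter] at ha hmax
  obtain ⟨z, rfl⟩ := Multiset.exists_cons_of_mem ha.1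
  have ha_pos : 0 < a := by
    by_contra! ha0
    have : (Multiset.filter (· ≤ k) (a ::ₘ z)).sum = 0 :=
      Multiset.sum_eq_zero fun b hb => by
        have := hmax b (Multiset.mem_filter.mp hb); omega
    omega
  have hz' : ∀ t, 1 ≤ t → t ≤ k - a → t ≤ (z.filter (· ≤ t)).sum := by
    intro t ht1 htk
    by_cases hat : a ≤ t
    · have hsub : (a ::ₘ z).filter (· ≤ k) ≤ (a ::ₘ z).filter (· ≤ t) :=
        Multiset.le_filter.mpr ⟨Multiset.filter_le _ _,
          fun b hb => (hmax b (Multiset.mem_filter.mp hb)).trans hat⟩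
      have := hk_le.trans (Multiset.sum_le_sum_of_le hsub)
      rw [Multiset.filter_cons_of_pos (p := (· ≤ t)) _ hat, Multiset.sum_cons] at this
      omega
    · simpa [Multiset.filter_cons_of_neg (p := (· ≤ t)) _ hat] using hz t ht1 (by omega)
  obtain ⟨s, hs, hsum⟩ := ih (k - a) (by omega) hz'
  exact ⟨a ::ₘ s, Multiset.cons_le_cons a hs, by rw [Multiset.sum_cons, hsum]; omega⟩

namespace Function

variable {α β : Type*} {f : α → α} {g : β → β}

theorem minimalPeriod_prodMap_of_isFixedPt_fst {x : α} (hx : IsFixedPt f x) (y : β) :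
    minimalPeriod (Prod.map f g) (x, y) = minimalPeriod g y := by
  rw [minimalPeriod_prodMap, minimalPeriod_eq_one_iff_isFixedPt.mpr hx, Nat.lcm_one_left]

theorem minimalPeriod_prodMap_of_isFixedPt_snd (x : α) {y : β} (hy : IsFixedPt g y) :
    minimalPeriod (Prod.map f g) (x, y) = minimalPeriod f x := by
  rw [minimalPeriod_prodMap, minimalPeriod_eq_one_iff_isFixedPt.mpr hy, Nat.lcm_one_right]

end Function

theorem Finset.card_singleton_product_union_product_singleton {α β : Type*} [Fintype α]
    [Fintype β] [DecidableEq α] [DecidableEq β] (a : α) (b : β) :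
    #(({a} ×ˢ univ) ∪ (univ ×ˢ {b})) + 1 = Fintype.card β + Fintype.card α := by
  have hinter : ({a} ×ˢ univ) ∩ (univ ×ˢ {b}) = {(a, b)} := by
    ext p
    simp [Prod.ext_iff, eq_comm]
  rw [← card_singleton (a, b), ← hinter, card_union_add_card_inter, card_product, card_product]
  simp

namespace Equiv.Perm

variable {α : Type*} [Fintype α] [DecidableEq α]

theorem minimalPeriod_eq_card_support_cycleOf {σ : Perm α} {x : α} (hx : x ∈ σ.support) :
    minimalPeriod σ x = #(σ.cycleOf x).support := by
  have hx' : x ∈ (σ.cycleOf x).support := mem_support_cycleOf_iff.mpr ⟨SameCycle.refl σ x, hx⟩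
  refine eq_of_forall_dvd fun n => ?_
  rw [← isPeriodicPt_iff_minimalPeriod_dvd, IsPeriodicPt, IsFixedPt, iterate_eq_pow,
    (isCycleOn_support_cycleOf σ x).pow_apply_eq hx']

theorem minimalPeriod_le_card_sub_one {σ : Perm α} {x : α} (hx : σ x = x)
    (hα : 2 ≤ Fintype.card α) (y : α) : minimalPeriod σ y ≤ Fintype.card α - 1 := by
  by_cases hy : y ∈ σ.support
  · have hsupp : σ.support ⊆ univ.erase x := fun z hz =>
      mem_erase.mpr ⟨by rintro rfl; exact mem_support.mp hz hx, mem_univ z⟩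
    calc minimalPeriod σ y = #(σ.cycleOf y).support := minimalPeriod_eq_card_support_cycleOf hy
      _ ≤ #σ.support := card_le_card (support_cycleOf_le σ y)
      _ ≤ #(univ.erase x) := card_le_card hsupp
      _ = Fintype.card α - 1 := by rw [card_erase_of_mem (mem_univ x), card_univ]
  · rw [minimalPeriod_eq_one_iff_isFixedPt.mpr (notMem_support.mp hy)]
    omega

theorem card_minimalPeriod_le_eq_sum_filter_fullCycleType (g : Perm α) {t : ℕ} (ht : 1 ≤ t) :
    #{p | minimalPeriod g p ≤ t} = ((fullCycleType g).filter (· ≤ t)).sum := by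
  set P : Finset α := {p | minimalPeriod g p ≤ t}
  set S := g.cycleFactorsFinset.filter (fun c => #c.support ≤ t)
  have hsum : ((fullCycleType g).filter (· ≤ t)).sum = ∑ c ∈ S, #c.support + #{p | g p = p} := by
    rw [fullCycleType, Multiset.filter_add, Multiset.sum_add]
    congr 1
    · rw [cycleType_def, Multiset.filter_map]
      rfl
    · rw [Multiset.filter_eq_self.mpr fun a ha => (Multiset.eq_of_mem_replicate ha).trans_le ht,
        Multiset.sum_replicate, smul_eq_mul, mul_one, Fintype.card_subtype]
  have hmoved : P.filter (· ∈ g.support) = S.biUnion support := by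
    ext p
    simp only [P, S, mem_filter, mem_univ, true_and, mem_biUnion]
    constructor
    · rintro ⟨hp, hps⟩
      exact ⟨g.cycleOf p, ⟨cycleOf_mem_cycleFactorsFinset_iff.mpr hps,
        minimalPeriod_eq_card_support_cycleOf hps ▸ hp⟩,
        mem_support_cycleOf_iff.mpr ⟨SameCycle.refl g p, hps⟩⟩
    · rintro ⟨c, ⟨hc, hct⟩, hpc⟩
      have hps := mem_cycleFactorsFinset_support_le hc hpc
      refine ⟨?_, hps⟩
      rwa [minimalPeriod_eq_card_support_cycleOf hps, ← cycle_is_cycleOf hpc hc]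
  have hfixed : P.filter (· ∉ g.support) = ({p | g p = p} : Finset α) := by
    ext p
    simp only [P, mem_filter, mem_univ, true_and, notMem_support]
    constructor
    · exact fun h => h.2
    · exact fun h => ⟨(minimalPeriod_eq_one_iff_isFixedPt.mpr h).trans_le ht, h⟩
  have hdisj : (S : Set (Perm α)).PairwiseDisjoint support := fun c hc d hd hcd =>
    (cycleFactorsFinset_pairwise_disjoint g (mem_filter.mp hc).1 (mem_filter.mp hd).1
      hcd).disjoint_support
  rw [hsum, ← card_biUnion hdisj, ← hmoved, ← hfixed, card_filter_add_card_filter_not]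

theorem exists_apply_eq_self_of_one_mem_fullCycleType {g : Perm α} (h : 1 ∈ fullCycleType g) :
    ∃ p, g p = p := by
  rcases Multiset.mem_add.mp h with h | h
  · exact absurd (two_le_of_mem_cycleType h) (by omega)
  · obtain ⟨⟨p, hp⟩⟩ :=
      Fintype.card_pos_iff.mp (Nat.pos_of_ne_zero (Multiset.mem_replicate.mp h).1)
    exact ⟨p, hp⟩

theorem two_mul_card_sub_one_le_sum_filter_fullCycleType {σ₁ σ₂ : Perm α} {g : Perm (α × α)}
    (hg : ⇑g = Prod.map σ₁ σ₂) {x₀ y₀ : α} (hx₀ : σ₁ x₀ = x₀) (hy₀ : σ₂ y₀ = y₀)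
    (hα : 2 ≤ Fintype.card α) :
    2 * Fintype.card α - 1 ≤ ((fullCycleType g).filter (· ≤ Fintype.card α - 1)).sum := by
  rw [← card_minimalPeriod_le_eq_sum_filter_fullCycleType g (by omega), hg]
  calc 2 * Fintype.card α - 1 = #(({x₀} ×ˢ univ) ∪ (univ ×ˢ {y₀})) := by
        have := card_singleton_product_union_product_singleton x₀ y₀
        omega
    _ ≤ _ := card_le_card fun p hp => by
      simp only [mem_union, mem_product, mem_singleton, mem_univ, and_true, true_and] at hp
      obtain ⟨x, y⟩ := p
      simp only [mem_filter, mem_univ, true_and]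
      rcases hp with rfl | rfl
      · rw [minimalPeriod_prodMap_of_isFixedPt_fst hx₀]
        exact minimalPeriod_le_card_sub_one hy₀ hα y
      · rw [minimalPeriod_prodMap_of_isFixedPt_snd x hy₀]
        exact minimalPeriod_le_card_sub_one hx₀ hα x

end Equiv.Perm

/-- For `g = ((σ₁, σ₂), 1)` acting coordinatewise on `X × X` with `|X| = √n = m`, if every
`1 ≤ i ≤ m - 1` is a partial sum of the cycle type of `g`, then so is every
`1 ≤ i ≤ 2m - 1`. -/
theorem wreath_untwisted_partial_sums (X : Type*) [Fintype X] [DecidableEq X]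
    (m : ℕ) (hm : Fintype.card X = m) (h4 : 4 ≤ m * m) (σ₁ σ₂ : Equiv.Perm X)
    (g : Equiv.Perm (X × X)) (hg : ∀ p : X × X, g p = (σ₁ p.1, σ₂ p.2))
    (h : ∀ i, 1 ≤ i → i ≤ m - 1 → IsPartialSum (fullCycleType g) i) :
    ∀ i, 1 ≤ i → i ≤ 2 * m - 1 → IsPartialSum (fullCycleType g) i := by
  subst hm
  have hX : 2 ≤ Fintype.card X := by nlinarith
  obtain ⟨⟨x₀, y₀⟩, hp₀⟩ :=
    Perm.exists_apply_eq_self_of_one_mem_fullCycleType (h 1 le_rfl (by omega)).one_mem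
  obtain ⟨hx₀, hy₀⟩ : σ₁ x₀ = x₀ ∧ σ₂ y₀ = y₀ := by simpa [hg] using hp₀
  have hcross := Perm.two_mul_card_sub_one_le_sum_filter_fullCycleType (funext hg) hx₀ hy₀ hX
  intro i hi1 hi2
  refine isPartialSum_of_forall_le_sum_filter_le fun t ht1 hti => ?_
  rcases le_or_gt t (Fintype.card X - 1) with htm | htm
  · exact (h t ht1 htm).le_sum_filter_le
  · calc t ≤ 2 * Fintype.card X - 1 := by omega
      _ ≤ _ := hcross
      _ ≤ _ := Multiset.sum_le_sum_of_le (Multiset.monotone_filter_right _ fun b hb => by omega)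
end

section
/- Let n be a natural number, m a nontrivial divisor of n, and 1 ≤ i ≤ n/2. The permutation group S_m ≀ S_{n/m}, in its imprimitive action on n points (with n/m blocks of size m), contains an element whose cycle type is (i, n-i) if and only if m divides i or n/m divides i. -/
/-!
An element `g` of cycle type `(i, n - i)` has two orbits, `S` and its complement. As `g` permutes
the blocks, the number of points of `S` in a block is constant along each orbit of the top group,
and the blocks meeting `S` form one such orbit; likewise for the complement. If some block meets
both orbits, every block meets both in the same way, so every block holds the same number of
points of `S` and `n/m ∣ i`. Otherwise each block lies inside `S` or outside it, and `m ∣ i`.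
Conversely, an `i`-cycle can rotate `i/m` whole blocks, or run through all `n/m` blocks taking
`i/(n/m)` points from each; two such cycles side by side give the cycle type `(i, n - i)`.
-/

open Equiv Equiv.Perm Finset

section FullCycleType

variable {α : Type*} [Fintype α] [DecidableEq α]

theorem fullCycleType_eq_cycleType_add_replicate (g : Perm α) :
    fullCycleType g = g.cycleType + .replicate (Fintype.card α - g.cycleType.sum) 1 := by
  rw [fullCycleType, ← card_fixedPoints]
  rfl

theorem sum_fullCycleType (g : Perm α) : (fullCycleType g).sum = Fintype.card α := by
  rw [fullCycleType_eq_cycleType_add_replicate, Multiset.sum_add, Multiset.sum_replicate,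
    smul_eq_mul, mul_one, Nat.add_sub_cancel' g.sum_cycleType_le]

theorem fullCycleType_finRotate {N : ℕ} (hN : 0 < N) : fullCycleType (finRotate N) = {N} := by
  obtain rfl | hN := (Nat.one_le_iff_ne_zero.2 hN.ne').eq_or_lt
  · simp [fullCycleType_eq_cycleType_add_replicate, Subsingleton.elim (finRotate 1) 1]
  · simp [fullCycleType_eq_cycleType_add_replicate, cycleType_finRotate_of_le hN]

theorem fullCycleType_permCongr {β : Type*} [Fintype β] [DecidableEq β] (e : α ≃ β)
    (p : Perm α) : fullCycleType (e.permCongr p) = fullCycleType p := by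
  have hct : (e.permCongr p).cycleType = p.cycleType := by
    have : e.permCongr p = p.extendDomain (e.trans (subtypeUnivEquiv fun _ => trivial).symm) := by
      ext x
      simp [extendDomain_apply_subtype]
    rw [this, cycleType_extendDomain]
  have hfix : Fintype.card {x // e.permCongr p x = x} = Fintype.card {a // p a = a} :=
    Fintype.card_congr (e.subtypeEquiv fun a => by simp).symm
  rw [fullCycleType, fullCycleType, hct, hfix]

variable {β : Type*} [Fintype β] [DecidableEq β]

theorem cycleType_sumCongr_one (p : Perm α) :
    (Perm.sumCongr p (1 : Perm β)).cycleType = p.cycleType := by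
  have : Perm.sumCongr p (1 : Perm β) = p.extendDomain sumIsLeft.symm := by
    ext (a | b)
    · exact (extendDomain_apply_subtype p sumIsLeft.symm (b := .inl a) rfl).symm
    · simp [extendDomain_apply_not_subtype]
  rw [this, cycleType_extendDomain]

theorem cycleType_one_sumCongr (q : Perm β) :
    (Perm.sumCongr (1 : Perm α) q).cycleType = q.cycleType := by
  have : Perm.sumCongr (1 : Perm α) q = q.extendDomain sumIsRight.symm := by
    ext (a | b)
    · simp [extendDomain_apply_not_subtype]
    · exact (extendDomain_apply_subtype q sumIsRight.symm (b := .inr b) rfl).symm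
  rw [this, cycleType_extendDomain]

theorem fullCycleType_sumCongr (p : Perm α) (q : Perm β) :
    fullCycleType (Perm.sumCongr p q) = fullCycleType p + fullCycleType q := by
  have hdisj : Disjoint (Perm.sumCongr p 1) (Perm.sumCongr 1 q) := fun
    | .inl _ => Or.inr rfl
    | .inr _ => Or.inl rfl
  have hfix : Fintype.card {x // Perm.sumCongr p q x = x} =
      Fintype.card {a // p a = a} + Fintype.card {b // q b = b} := by
    rw [Fintype.card_congr subtypeSum, Fintype.card_sum]
    simp
  rw [fullCycleType, hfix, ← mul_one p, ← one_mul q, ← sumCongr_mul, hdisj.cycleType_mul,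
    cycleType_sumCongr_one, cycleType_one_sumCongr, mul_one, one_mul, Multiset.replicate_add,
    fullCycleType, fullCycleType, add_add_add_comm]

end FullCycleType

section Orbits

variable {α : Type*} [Fintype α] [DecidableEq α]

theorem exists_isCycleOn_of_fullCycleType_eq_pair_of_two_le {g : Perm α} {a b : ℕ}
    (h : fullCycleType g = {a, b}) (hb : 2 ≤ b) :
    ∃ S : Finset α, #S = a ∧ g.IsCycleOn S ∧ g.IsCycleOn ↑Sᶜ := by
  have hcard : Fintype.card α = a + b := by
    simpa using (sum_fullCycleType g).symm.trans (congrArg _ h)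
  rw [fullCycleType_eq_cycleType_add_replicate] at h
  have hb_mem : b ∈ g.cycleType := by
    have hb' : b ∈ g.cycleType + .replicate (Fintype.card α - g.cycleType.sum) 1 := by simp [h]
    refine (Multiset.mem_add.1 hb').resolve_right fun h' => ?_
    have := Multiset.eq_of_mem_replicate h'
    omega
  obtain ⟨c, τ, rfl, hcτ, hc, hcb⟩ := mem_cycleType_iff.1 hb_mem
  have hfactors := hcτ.cycleFactorsFinset_mul_eq_union
  have hc_mem : c ∈ (c * τ).cycleFactorsFinset := by
    simp [hfactors, hc.cycleFactorsFinset_eq_singleton]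
  refine ⟨c.supportᶜ, by rw [card_compl, hcb, hcard]; omega, ?_, by
    simpa using isCycleOn_support_of_mem_cycleFactorsFinset hc_mem⟩
  -- Peeling off the `b`-cycle `c` leaves `{a}`: the rest of `g` is an `a`-cycle or a fixed point.
  set R := Multiset.replicate (Fintype.card α - (c * τ).cycleType.sum) 1
  have hrest : τ.cycleType + R = {a} := by
    rw [hcτ.cycleType_mul, hc.cycleType, hcb, Multiset.pair_comm, Multiset.insert_eq_cons,
      Multiset.add_assoc, Multiset.singleton_add] at h
    exact Multiset.cons_inj_right _ |>.1 h
  have hτ_card := congrArg Multiset.card hrest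
  rw [Multiset.card_add, Multiset.card_singleton] at hτ_card
  by_cases hτ : τ = 1
  · subst hτ
    have ha : a = 1 := by
      rw [cycleType_one, zero_add] at hrest
      exact Multiset.eq_of_mem_replicate (hrest ▸ Multiset.mem_singleton_self a)
    obtain ⟨x, hx⟩ := card_eq_one.1 (show #c.supportᶜ = 1 by rw [card_compl, hcb]; omega)
    rw [hx, coe_singleton, isCycleOn_singleton, mul_one, ← notMem_support]
    simpa using hx.symm.subset (mem_singleton_self x)
  have hτ_cycle : τ.IsCycle := by
    rw [← card_cycleType_eq_one]
    have := card_cycleType_pos.2 hτ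
    omega
  have hτa : #τ.support = a := by
    rw [← card_cycleType_eq_one.2 hτ_cycle] at hτ_card
    rw [Multiset.card_eq_zero.1 (by omega : Multiset.card R = 0), add_zero,
      hτ_cycle.cycleType] at hrest
    exact Multiset.singleton_inj.1 hrest
  have hτ_support : τ.support = c.supportᶜ :=
    eq_of_subset_of_card_le (subset_compl_iff_disjoint_left.2 hcτ.disjoint_support)
      (by rw [card_compl, hcb, hτa, hcard]; omega)
  rw [← hτ_support]
  exact isCycleOn_support_of_mem_cycleFactorsFinset
    (by simp [hfactors, hτ_cycle.cycleFactorsFinset_eq_singleton])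

theorem exists_isCycleOn_of_fullCycleType_eq_pair {g : Perm α} {a b : ℕ}
    (h : fullCycleType g = {a, b}) :
    ∃ S : Finset α, #S = a ∧ g.IsCycleOn S ∧ g.IsCycleOn ↑Sᶜ := by
  have hcard : Fintype.card α = a + b := by
    simpa using (sum_fullCycleType g).symm.trans (congrArg _ h)
  rcases le_or_gt 2 b with hb | hb
  · exact exists_isCycleOn_of_fullCycleType_eq_pair_of_two_le h hb
  rcases le_or_gt 2 a with ha | ha
  · obtain ⟨T, hT, hTg, hTcg⟩ :=
      exists_isCycleOn_of_fullCycleType_eq_pair_of_two_le (Multiset.pair_comm a b ▸ h) ha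
    exact ⟨Tᶜ, by rw [card_compl, hT]; omega, hTcg, by rwa [compl_compl]⟩
  have hg : g = 1 := by
    refine cycleType_eq_zero.1 (Multiset.eq_zero_of_forall_notMem fun k hk => ?_)
    have hk' : k ∈ fullCycleType g := Multiset.mem_add.2 (Or.inl hk)
    simp only [h, Multiset.insert_eq_cons, Multiset.mem_cons, Multiset.mem_singleton] at hk'
    have := two_le_of_mem_cycleType hk
    omega
  have ha1 : a = 1 := by
    have ha' : a ∈ fullCycleType g := by simp [h]
    simp only [fullCycleType, hg, cycleType_one, zero_add] at ha'
    exact Multiset.eq_of_mem_replicate ha'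
  obtain ⟨S, -, hS⟩ :=
    exists_subset_card_eq (show 1 ≤ #(univ : Finset α) by rw [card_univ]; omega)
  have hSc : #Sᶜ ≤ 1 := by rw [card_compl, hS]; omega
  refine ⟨S, by omega, ?_, ?_⟩ <;>
    rw [hg, isCycleOn_one, ← card_le_one_iff_subsingleton] <;> omega

end Orbits

theorem Equiv.Perm.SameCycle.apply_eq_of_forall_apply_eq {α γ : Type*} [Finite α] {f : Perm α}
    {φ : α → γ} (hφ : ∀ x, φ (f x) = φ x) {x y : α} (h : f.SameCycle x y) : φ x = φ y := by
  obtain ⟨n, rfl⟩ := h.exists_nat_pow_eq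
  clear h
  induction n with
  | zero => rfl
  | succ n ih => rw [ih, pow_succ', mul_apply, hφ]

theorem dvd_sum_or_card_dvd_sum {ι : Type*} [Fintype ι] {s t : ι → ℕ} {m : ℕ}
    (hst : ∀ j, s j + t j = m) (hs : ∀ j j', s j ≠ 0 → s j' ≠ 0 → s j = s j')
    (ht : ∀ j j', t j ≠ 0 → t j' ≠ 0 → t j = t j') :
    m ∣ ∑ j, s j ∨ Fintype.card ι ∣ ∑ j, s j := by
  by_cases h : ∃ j₀, s j₀ ≠ 0 ∧ t j₀ ≠ 0
  · obtain ⟨j₀, hs₀, ht₀⟩ := h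
    have hconst : ∀ j, s j = s j₀ := fun j => by
      by_contra hne
      have hsj : s j = 0 := by_contra fun h => hne (hs j j₀ h hs₀)
      have := ht j j₀ (by grind) ht₀
      grind
    right
    rw [sum_congr rfl fun j _ => hconst j, sum_const, card_univ, smul_eq_mul]
    exact dvd_mul_right _ _
  · push Not at h
    left
    refine dvd_sum fun j _ => ?_
    by_cases hsj : s j = 0
    · simp [hsj]
    · rw [← hst j, h j hsj, add_zero]

section Blocks

variable {α β : Type*} [DecidableEq β] {g : Perm α} {gB : Perm β} {B : α → β}

theorem card_filter_fiber_apply (hB : ∀ x, B (g x) = gB (B x)) {S : Finset α}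
    (hS : ∀ x, g x ∈ S ↔ x ∈ S) (x : α) :
    #{z ∈ S | B z = B (g x)} = #{z ∈ S | B z = B x} := by
  have hB' : ∀ z, B (g.symm z) = gB.symm (B z) := fun z => by
    rw [eq_symm_apply, ← hB, apply_symm_apply]
  refine card_nbij' g.symm g (fun z hz => ?_) (fun z hz => ?_) (fun z _ => by simp)
    (fun z _ => by simp)
  · simp only [coe_filter, Set.mem_ofPred_eq] at hz ⊢
    rw [← hS, apply_symm_apply, hB', hz.2, hB, symm_apply_apply]
    exact ⟨hz.1, rfl⟩
  · simp only [coe_filter, Set.mem_ofPred_eq] at hz ⊢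
    rw [hS, hB, hz.2, hB]
    exact ⟨hz.1, rfl⟩

theorem dvd_card_or_dvd_card_of_isCycleOn [Fintype α] [DecidableEq α] [Fintype β] {m : ℕ}
    (hfib : ∀ j, Fintype.card {x // B x = j} = m) (hB : ∀ x, B (g x) = gB (B x))
    {S : Finset α} (hS : g.IsCycleOn S) (hSc : g.IsCycleOn ↑Sᶜ) :
    m ∣ #S ∨ Fintype.card β ∣ #S := by
  have hconst : ∀ {T : Finset α}, g.IsCycleOn T → ∀ j j', #{x ∈ T | B x = j} ≠ 0 →
      #{x ∈ T | B x = j'} ≠ 0 → #{x ∈ T | B x = j} = #{x ∈ T | B x = j'} := by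
    intro T hT j j' hj hj'
    obtain ⟨x, hx⟩ := card_ne_zero.1 hj
    obtain ⟨y, hy⟩ := card_ne_zero.1 hj'
    rw [mem_filter] at hx hy
    rw [← hx.2, ← hy.2]
    exact (hT.2 hx.1 hy.1).apply_eq_of_forall_apply_eq (φ := fun x => #{z ∈ T | B z = B x})
      (card_filter_fiber_apply hB fun _ => hT.apply_mem_iff)
  have hsplit : ∀ j, #{x ∈ S | B x = j} + #{x ∈ Sᶜ | B x = j} = m := fun j => by
    rw [← card_union_of_disjoint (disjoint_filter_filter disjoint_compl_right), ← filter_union,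
      union_compl, ← hfib j, Fintype.card_subtype]
  rw [card_eq_sum_card_fiberwise (t := univ) (f := B) (by simp)]
  exact dvd_sum_or_card_dvd_sum hsplit (hconst hS) (hconst hSc)

end Blocks

theorem modNat_finRotate {s d : ℕ} (x : Fin (s * d)) :
    (finRotate (s * d) x).modNat = finRotate d x.modNat := by
  have := x.neZero
  have : NeZero d := ⟨by rintro rfl; exact x.elim0⟩
  ext
  simp only [Fin.modNat, finRotate_apply, Fin.val_add, Fin.val_one']
  rw [Nat.mod_mod_of_dvd _ (dvd_mul_left d s), Nat.add_mod,
    Nat.mod_mod_of_dvd _ (dvd_mul_left d s)]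

theorem card_modNat_eq {s d : ℕ} (j : Fin d) :
    Fintype.card {x : Fin (s * d) // x.modNat = j} = s := by
  have e : Fin s ≃ {x : Fin (s * d) // x.modNat = j} :=
    { toFun a := ⟨finProdFinEquiv (a, j),
        congrArg Prod.snd (finProdFinEquiv.symm_apply_apply (a, j))⟩
      invFun x := x.1.divNat
      left_inv a := congrArg Prod.fst (finProdFinEquiv.symm_apply_apply (a, j))
      right_inv := fun ⟨x, hx⟩ => Subtype.ext <| by
        subst hx
        exact finProdFinEquiv.apply_symm_apply x }
  rw [← Fintype.card_congr e, Fintype.card_fin]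

/-- `S_m ≀ S_β`, acting on `α` with the fibres of `B` as blocks, contains an element of full cycle
type `M`. -/
def WreathHasFullCycleType (α β : Type*) [Fintype α] [DecidableEq α] [DecidableEq β] (m : ℕ)
    (M : Multiset ℕ) : Prop :=
  ∃ (g : Perm α) (B : α → β) (gB : Perm β),
    (∀ j, Fintype.card {x // B x = j} = m) ∧ (∀ x, B (g x) = gB (B x)) ∧ fullCycleType g = M

section Wreath

variable {α β : Type*} [Fintype α] [DecidableEq α] [DecidableEq β]

theorem WreathHasFullCycleType.dvd_or_card_dvd [Fintype β] {m a b : ℕ}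
    (h : WreathHasFullCycleType α β m {a, b}) : m ∣ a ∨ Fintype.card β ∣ a := by
  obtain ⟨g, B, gB, hfib, hB, hg⟩ := h
  obtain ⟨S, rfl, hS, hSc⟩ := exists_isCycleOn_of_fullCycleType_eq_pair hg
  exact dvd_card_or_dvd_card_of_isCycleOn hfib hB hS hSc

theorem WreathHasFullCycleType.congr {α' β' : Type*} [Fintype α'] [DecidableEq α']
    [DecidableEq β'] {m : ℕ} {M : Multiset ℕ} (e : α ≃ α') (eB : β ≃ β')
    (h : WreathHasFullCycleType α β m M) : WreathHasFullCycleType α' β' m M := by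
  obtain ⟨g, B, gB, hfib, hB, hg⟩ := h
  refine ⟨e.permCongr g, eB ∘ B ∘ e.symm, eB.permCongr gB, fun j => ?_, fun x => by simp [hB],
    by rw [fullCycleType_permCongr, hg]⟩
  rw [← hfib (eB.symm j)]
  exact Fintype.card_congr (e.symm.subtypeEquiv fun x => by simp [eq_symm_apply])

end Wreath

theorem wreathHasFullCycleType_pair_mul_left {m s u : ℕ} (hs : 0 < m * s) (hu : 0 < m * u) :
    WreathHasFullCycleType (Fin (m * s) ⊕ Fin (m * u)) (Fin s ⊕ Fin u) m {m * s, m * u} := by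
  refine ⟨Perm.sumCongr (finRotate _) (finRotate _), Sum.map Fin.modNat Fin.modNat,
    Perm.sumCongr (finRotate s) (finRotate u), fun j => ?_, ?_, ?_⟩
  · rw [Fintype.card_congr subtypeSum, Fintype.card_sum]
    rcases j with j | j <;> simp [card_modNat_eq]
  · rintro (x | x)
    · exact congrArg Sum.inl (modNat_finRotate x)
    · exact congrArg Sum.inr (modNat_finRotate x)
  · rw [fullCycleType_sumCongr, fullCycleType_finRotate hs, fullCycleType_finRotate hu]
    rfl

theorem wreathHasFullCycleType_pair_mul_right {s u k : ℕ} (hs : 0 < s * k) (hu : 0 < u * k) :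
    WreathHasFullCycleType (Fin (s * k) ⊕ Fin (u * k)) (Fin k) (s + u) {s * k, u * k} := by
  refine ⟨Perm.sumCongr (finRotate _) (finRotate _), Sum.elim Fin.modNat Fin.modNat,
    finRotate k, fun j => ?_, ?_, ?_⟩
  · rw [Fintype.card_congr subtypeSum, Fintype.card_sum]
    exact congrArg₂ (· + ·) (card_modNat_eq j) (card_modNat_eq j)
  · rintro (x | x) <;> exact modNat_finRotate x
  · rw [fullCycleType_sumCongr, fullCycleType_finRotate hs, fullCycleType_finRotate hu]
    rfl

theorem wreathHasFullCycleType_of_dvd {n m i : ℕ} (hmn : m ∣ n) (hmi : m ∣ i) (hi : 0 < i)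
    (hin : i < n) : WreathHasFullCycleType (Fin n) (Fin (n / m)) m {i, n - i} := by
  obtain ⟨s, rfl⟩ := hmi
  obtain ⟨u, hu⟩ : m ∣ n - m * s := Nat.dvd_sub hmn (dvd_mul_right m s)
  have hm : 0 < m := Nat.pos_of_mul_pos_right hi
  have hn : n = m * (s + u) := by rw [mul_add, ← hu, Nat.add_sub_cancel' hin.le]
  rw [hu]
  refine (wreathHasFullCycleType_pair_mul_left hi (hu ▸ Nat.sub_pos_of_lt hin)).congr
    (Fintype.equivFinOfCardEq ?_) (Fintype.equivFinOfCardEq ?_)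
  · simp [hn, mul_add]
  · simp [hn, Nat.mul_div_cancel_left _ hm]

theorem wreathHasFullCycleType_of_div_dvd {n m i : ℕ} (hmn : m ∣ n) (hki : n / m ∣ i)
    (hi : 0 < i) (hin : i < n) :
    WreathHasFullCycleType (Fin n) (Fin (n / m)) m {i, n - i} := by
  obtain ⟨k, rfl⟩ := hmn
  have hm : 0 < m := Nat.pos_of_mul_pos_right (hi.trans hin)
  have hk : 0 < k := Nat.pos_of_mul_pos_left (hi.trans hin)
  rw [Nat.mul_div_cancel_left k hm] at hki ⊢
  obtain ⟨s, rfl⟩ := hki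
  obtain ⟨u, hu⟩ : k ∣ m * k - k * s := Nat.dvd_sub (dvd_mul_left k m) (dvd_mul_right k s)
  have hsum : s + u = m := by
    refine Nat.eq_of_mul_eq_mul_left hk ?_
    rw [mul_add, ← hu, Nat.add_sub_cancel' hin.le, mul_comm]
  rw [hu, mul_comm k s, mul_comm k u, ← hsum]
  refine (wreathHasFullCycleType_pair_mul_right (by rwa [mul_comm]) ?_).congr
    (Fintype.equivFinOfCardEq ?_) (Equiv.refl _)
  · rw [mul_comm, ← hu]
    exact Nat.sub_pos_of_lt hin
  · simp [add_mul]

theorem wreath_contains_two_cycle_type_iff_general (n m i : ℕ) (hmn : m ∣ n)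
    (hi1 : 1 ≤ i) (hi2 : i ≤ n / 2) :
    (∃ (g : Equiv.Perm (Fin n)) (B : Fin n → Fin (n / m))
        (gB : Equiv.Perm (Fin (n / m))),
        (∀ j, Fintype.card {x // B x = j} = m) ∧ (∀ x, B (g x) = gB (B x)) ∧
        fullCycleType g = {i, n - i}) ↔ (m ∣ i ∨ (n / m) ∣ i) := by
  refine ⟨fun h => by simpa using WreathHasFullCycleType.dvd_or_card_dvd (α := Fin n) h, ?_⟩
  rintro (h | h)
  · exact wreathHasFullCycleType_of_dvd hmn h (by omega) (by omega)
  · exact wreathHasFullCycleType_of_div_dvd hmn h (by omega) (by omega)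

/-- For `m` a nontrivial divisor of `n` and `1 ≤ i ≤ n/2`, the imprimitive wreath product
`S_m ≀ S_{n/m}` (permutations preserving some partition of the `n` points into `n/m`
blocks of size `m`) contains an element of cycle type `(i, n-i)` if and only if
`m ∣ i` or `(n/m) ∣ i`. -/
theorem wreath_contains_two_cycle_type_iff (n m i : ℕ) (hmn : m ∣ n) (hm1 : 1 < m)
    (hm2 : m < n) (hi1 : 1 ≤ i) (hi2 : i ≤ n / 2) :
    (∃ (g : Equiv.Perm (Fin n)) (B : Fin n → Fin (n / m))
        (gB : Equiv.Perm (Fin (n / m))),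
        (∀ j, Fintype.card {x // B x = j} = m) ∧ (∀ x, B (g x) = gB (B x)) ∧
        fullCycleType g = {i, n - i}) ↔ (m ∣ i ∨ (n / m) ∣ i) :=
  wreath_contains_two_cycle_type_iff_general n m i hmn hi1 hi2
end

section
/- Let n be odd and let 2 ≤ i ≤ (n-1)/2 be coprime with n. Then the cycle type (i, i, n - 2i) is not contained in any imprimitive wreath product S_m ≀ S_{n/m} (m a nontrivial divisor of n) acting on n points. That is, no element of S_n with cycle type (i, i, n-2i) preserves a nontrivial partition of {1, ..., n} into blocks of equal size. -/
open Finset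

namespace Equiv.Perm

theorem orderOf_dvd_orderOf_of_semiconj {α β : Type*} {g : Perm α} {gB : Perm β} {B : α → β}
    (hB : Function.Surjective B) (h : ∀ x, B (g x) = gB (B x)) : orderOf gB ∣ orderOf g := by
  refine orderOf_dvd_of_pow_eq_one (Equiv.ext fun b => ?_)
  obtain ⟨x, rfl⟩ := hB b
  have := Function.Semiconj.iterate_right h (orderOf g) x
  rw [← coe_pow, ← coe_pow, pow_orderOf_eq_one] at this
  simpa using this.symm

theorem apply_mem_orbit_zpowers_iff {β : Type*} (f : Perm β) (x y : β) :
    f y ∈ MulAction.orbit (Subgroup.zpowers f) x ↔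
      y ∈ MulAction.orbit (Subgroup.zpowers f) x := by
  rw [← MulAction.orbit_eq_iff, ← MulAction.orbit_eq_iff,
    show f y = (⟨f, Subgroup.mem_zpowers f⟩ : Subgroup.zpowers f) • y from rfl,
    MulAction.orbit_smul]

variable {α : Type*} [Fintype α] [DecidableEq α]

theorem sum_fullCycleType (g : Perm α) : (fullCycleType g).sum = Fintype.card α := by
  have hfix : Fintype.card {x // g x = x} = Fintype.card α - g.cycleType.sum :=
    (Fintype.card_congr (Equiv.refl _)).trans g.card_fixedPoints
  rw [fullCycleType, Multiset.sum_add, Multiset.sum_replicate, smul_eq_mul, mul_one, hfix]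
  have := g.sum_cycleType_le
  omega

theorem orderOf_dvd_prod_fullCycleType (g : Perm α) : orderOf g ∣ (fullCycleType g).prod := by
  rw [← lcm_cycleType, Multiset.lcm_dvd]
  exact fun k hk => Multiset.dvd_prod (Multiset.mem_add.mpr (Or.inl hk))

theorem cycleType_subtypePerm_le (g : Perm α) {p : α → Prop} [DecidablePred p]
    (h : ∀ x, p (g x) ↔ p x) : (g.subtypePerm h).cycleType ≤ g.cycleType := by
  rw [← cycleType_ofSubtype, cycleType_def, cycleType_def]
  refine Multiset.map_le_map (Finset.val_le_iff.mpr fun c hc => ?_)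
  rw [mem_cycleFactorsFinset_iff] at hc ⊢
  refine ⟨hc.1, fun a ha => ?_⟩
  have hpa : p a := by
    by_contra hpa
    have := hc.2 a ha
    rw [ofSubtype_subtypePerm_of_not_mem h hpa] at this
    exact mem_support.mp ha this
  rw [hc.2 a ha, ofSubtype_subtypePerm_of_mem h hpa]

theorem fullCycleType_subtypePerm_le (g : Perm α) {p : α → Prop} [DecidablePred p]
    (h : ∀ x, p (g x) ↔ p x) : fullCycleType (g.subtypePerm h) ≤ fullCycleType g := by
  refine add_le_add (g.cycleType_subtypePerm_le h) ((Multiset.replicate_le_replicate 1).mpr ?_)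
  exact Fintype.card_le_of_injective (fun x => ⟨x.1.1, congrArg Subtype.val x.2⟩)
    fun x y hxy => Subtype.ext (Subtype.ext (Subtype.mk.inj hxy))

end Equiv.Perm

theorem MulAction.ncard_orbit_zpowers_dvd_orderOf {G X : Type*} [Group G] [MulAction G X]
    (g : G) (x : X) : (orbit (Subgroup.zpowers g) x).ncard ∣ orderOf g :=
  index_stabilizer (Subgroup.zpowers g) x ▸ Nat.card_zpowers g ▸ Subgroup.index_dvd_card _

theorem card_subtype_apply_mem_of_card_fiber {α β : Type*} [Fintype α] [DecidableEq β]
    {B : α → β} {m : ℕ} (hB : ∀ b, Fintype.card {x // B x = b} = m) (O : Finset β) :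
    Fintype.card {x // B x ∈ O} = #O * m := by
  rw [Fintype.card_subtype,
    card_eq_sum_card_fiberwise (f := B) (t := O) fun x hx => by simpa using hx,
    ← smul_eq_mul, ← sum_const]
  refine sum_congr rfl fun b hb => ?_
  rw [← hB b, Fintype.card_subtype, filter_filter]
  exact congrArg card (filter_congr fun x _ => ⟨And.right, fun hx => ⟨hx ▸ hb, hx⟩⟩)

theorem exists_le_fullCycleType_sum_eq {α β : Type*} [Fintype α] [DecidableEq α]
    [DecidableEq β]
    {g : Equiv.Perm α} {gB : Equiv.Perm β} {B : α → β} {m : ℕ}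
    (hB : ∀ b, Fintype.card {x // B x = b} = m) (hg : ∀ x, B (g x) = gB (B x))
    {O : Finset β} (hO : ∀ b, gB b ∈ O ↔ b ∈ O) :
    ∃ s ≤ fullCycleType g, s.sum = #O * m := by
  have hU : ∀ x, B (g x) ∈ O ↔ B x ∈ O := fun x => hg x ▸ hO (B x)
  refine ⟨fullCycleType (g.subtypePerm (p := (B · ∈ O)) hU),
    g.fullCycleType_subtypePerm_le (p := (B · ∈ O)) hU, ?_⟩
  rw [Equiv.Perm.sum_fullCycleType, card_subtype_apply_mem_of_card_fiber hB]

theorem sum_eq_of_le_iin_of_dvd {n i m : ℕ} (hcop : Nat.Coprime n (2 * i)) (h2i : 2 * i ≤ n)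
    (hmn : m ∣ n) (hm1 : m ≠ 1) {s : Multiset ℕ} (hs : s ≤ {i, i, n - 2 * i})
    (hdvd : m ∣ s.sum) (hs0 : s.sum ≠ 0) : s.sum = n := by
  have hm2i : ¬ m ∣ 2 * i := fun h => hm1 ((hcop.coprime_dvd_left hmn).eq_one_of_dvd h)
  have hmi : ¬ m ∣ i := fun h => hm2i (h.mul_left 2)
  have hsub : ∀ k, k ≤ n → m ∣ n - k → m ∣ k := fun k hk h => by
    simpa [Nat.sub_sub_self hk] using Nat.dvd_sub hmn h
  rw [← Multiset.mem_powerset] at hs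
  simp only [Multiset.insert_eq_cons, Multiset.powerset_cons, Multiset.map_add, Multiset.map_map,
    Function.comp_apply, Multiset.mem_add, Multiset.mem_powerset, Multiset.le_singleton,
    Multiset.mem_map, exists_eq_or_imp, Multiset.cons_zero, ↓existsAndEq, true_and] at hs
  rcases hs with ((rfl | rfl) | rfl | rfl) | (rfl | rfl) | rfl | rfl <;>
    simp only [Multiset.sum_cons, Multiset.sum_singleton, Multiset.sum_zero] at hdvd hs0 ⊢
  · exact absurd rfl hs0
  · exact absurd (hsub _ h2i hdvd) hm2i
  · exact absurd hdvd hmi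
  · exact absurd (hsub i (by omega) (by rwa [show n - i = i + (n - 2 * i) by omega])) hmi
  · exact absurd hdvd hmi
  · exact absurd (hsub i (by omega) (by rwa [show n - i = i + (n - 2 * i) by omega])) hmi
  · exact absurd (by rwa [two_mul]) hm2i
  · omega

theorem cycle_type_iin_not_imprimitive_general (n i : ℕ) (hn : Odd n)
    (hi2 : i ≤ (n - 1) / 2) (hcop : Nat.gcd i n = 1) :
    ∀ m, m ∣ n → 1 < m → m < n →
      ¬ ∃ (g : Equiv.Perm (Fin n)) (B : Fin n → Fin (n / m))
          (gB : Equiv.Perm (Fin (n / m))),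
          (∀ j, Fintype.card {x // B x = j} = m) ∧ (∀ x, B (g x) = gB (B x)) ∧
          fullCycleType g = {i, i, n - 2 * i} := by
  classical
  rintro m hmn hm1 hmlt ⟨g, B, gB, hfib, hcomm, hct⟩
  have h2i : 2 * i ≤ n := by omega
  have hni : Nat.Coprime n i := Nat.coprime_comm.mp hcop
  have hn2i : Nat.Coprime n (2 * i) := (Nat.coprime_two_right.mpr hn).mul_right hni
  set orb := MulAction.orbit (Subgroup.zpowers gB) (B ⟨0, hn.pos⟩)
  obtain ⟨s, hs, hsum⟩ := exists_le_fullCycleType_sum_eq hfib hcomm (O := orb.toFinset)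
    fun b => by simpa only [Set.mem_toFinset] using gB.apply_mem_orbit_zpowers_iff _ b
  have hOne : orb.ncard ≠ 0 :=
    ((Set.ncard_pos orb.toFinite).mpr ⟨_, MulAction.mem_orbit_self _⟩).ne'
  rw [← Set.ncard_eq_toFinset_card'] at hsum
  have hOm : orb.ncard * m = n := hsum ▸ sum_eq_of_le_iin_of_dvd hn2i h2i hmn hm1.ne' (hct ▸ hs)
    (hsum ▸ dvd_mul_left m _) (hsum ▸ Nat.mul_ne_zero hOne (by omega))
  have hBsurj : Function.Surjective B := fun b => by
    obtain ⟨⟨x, hx⟩⟩ := Fintype.card_pos_iff.mp ((hfib b).symm ▸ Nat.zero_lt_of_lt hm1)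
    exact ⟨x, hx⟩
  have hOdvd : orb.ncard ∣ i * (i * (n - 2 * i)) :=
    calc orb.ncard ∣ orderOf gB := MulAction.ncard_orbit_zpowers_dvd_orderOf gB _
      _ ∣ orderOf g := Equiv.Perm.orderOf_dvd_orderOf_of_semiconj hBsurj hcomm
      _ ∣ (fullCycleType g).prod := g.orderOf_dvd_prod_fullCycleType
      _ = i * (i * (n - 2 * i)) := by simp [hct]
  have hcopP : Nat.Coprime n (i * (i * (n - 2 * i))) :=
    hni.mul_right (hni.mul_right ((Nat.coprime_self_sub_right h2i).mpr hn2i))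
  have hO1 : orb.ncard = 1 := (hcopP.coprime_dvd_left ⟨m, hOm.symm⟩).eq_one_of_dvd hOdvd
  rw [hO1, one_mul] at hOm
  omega

/-- For `n` odd and `2 ≤ i ≤ (n-1)/2` coprime with `n`, no element of `S_n` with cycle
type `(i, i, n - 2i)` preserves a nontrivial partition of the `n` points into blocks of
equal size; i.e. `(i, i, n-2i)` is contained in no imprimitive wreath product
`S_m ≀ S_{n/m}`. -/
theorem cycle_type_iin_not_imprimitive (n i : ℕ) (hn : Odd n) (hi1 : 2 ≤ i)
    (hi2 : i ≤ (n - 1) / 2) (hcop : Nat.gcd i n = 1) :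
    ∀ m, m ∣ n → 1 < m → m < n →
      ¬ ∃ (g : Equiv.Perm (Fin n)) (B : Fin n → Fin (n / m))
          (gB : Equiv.Perm (Fin (n / m))),
          (∀ j, Fintype.card {x // B x = j} = m) ∧ (∀ x, B (g x) = gB (B x)) ∧
          fullCycleType g = {i, i, n - 2 * i} :=
  cycle_type_iin_not_imprimitive_general n i hn hi2 hcop
end

section
/- Let x ∈ A_n with C_{S_n}(x) ⊆ A_n. Then N_{S_n}(⟨x⟩) ≤ A_n if and only if the intersection of the A_n-conjugacy class of x with ⟨x⟩ equals the intersection of the S_n-conjugacy class of x with ⟨x⟩. -/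
/-!
In a finite group, `g` normalizes `⟨x⟩` exactly when `g x g⁻¹ ∈ ⟨x⟩`, since a conjugate of `x`
lying in `⟨x⟩` has the order of `x` and so generates `⟨x⟩`. Hence `N_{S_n}(⟨x⟩) ≤ A_n` says that
every `S_n`-conjugate of `x` inside `⟨x⟩` is conjugated there by an even permutation. Conversely,
if `g x g⁻¹ = h x h⁻¹` with `h` even, then `h⁻¹ g` centralizes `x`, so `g` is even as well.
-/

open Subgroup

variable {G : Type*} [Group G] {x g : G}

lemma zpowers_eq_of_mem_of_orderOf_eq {y : G} (hx : IsOfFinOrder x) (hy : y ∈ zpowers x)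
    (ho : orderOf y = orderOf x) : zpowers y = zpowers x :=
  have : Finite (zpowers x) := hx.finite_zpowers.to_subtype
  eq_of_le_of_card_ge (zpowers_le_of_mem hy) (by rw [Nat.card_zpowers, Nat.card_zpowers, ho])

lemma mem_normalizer_zpowers_iff (hx : IsOfFinOrder x) :
    g ∈ normalizer (zpowers x) ↔ g * x * g⁻¹ ∈ zpowers x := by
  rw [mem_normalizer_iff_map_conj_eq, MonoidHom.map_zpowers, MonoidHom.coe_coe,
    MulAut.conj_apply]
  refine ⟨fun h => h ▸ mem_zpowers _, fun h => zpowers_eq_of_mem_of_orderOf_eq hx h ?_⟩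
  exact (SemiconjBy.orderOf_eq g (SemiconjBy.conj_mk g x)).symm

lemma mem_of_conj_eq_conj {K : Subgroup G} (hc : centralizer {x} ≤ K) {h : G} (hh : h ∈ K)
    (he : g * x * g⁻¹ = h * x * h⁻¹) : g ∈ K := by
  have hcent : h⁻¹ * g ∈ centralizer {x} := by
    rw [mem_centralizer_singleton_iff]
    calc h⁻¹ * g * x = h⁻¹ * (g * x * g⁻¹) * g := by group
      _ = x * (h⁻¹ * g) := by rw [he]; group
  simpa using mul_mem hh (hc hcent)

theorem normalizer_le_alternating_iff_classes_agree_general (n : ℕ) (x : Equiv.Perm (Fin n))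
    (hc : Subgroup.centralizer {x} ≤ alternatingGroup (Fin n)) :
    (Subgroup.normalizer (Subgroup.zpowers x) ≤ alternatingGroup (Fin n)) ↔
      ({y | ∃ g ∈ alternatingGroup (Fin n), g * x * g⁻¹ = y} ∩
          {y | y ∈ Subgroup.zpowers x} =
        {y : Equiv.Perm (Fin n) | ∃ g, g * x * g⁻¹ = y} ∩
          {y | y ∈ Subgroup.zpowers x}) := by
  have hx : IsOfFinOrder x := isOfFinOrder_of_finite x
  constructor
  · intro hN
    refine Set.Subset.antisymm (fun y ⟨⟨g, _, hg⟩, hy⟩ => ⟨⟨g, hg⟩, hy⟩) ?_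
    rintro _ ⟨⟨g, rfl⟩, hy⟩
    exact ⟨⟨g, hN ((mem_normalizer_zpowers_iff hx).2 hy), rfl⟩, hy⟩
  · intro hEq g hg
    have hmem : g * x * g⁻¹ ∈ {y | ∃ h ∈ alternatingGroup (Fin n), h * x * h⁻¹ = y} ∩
        {y | y ∈ zpowers x} :=
      hEq ▸ ⟨⟨g, rfl⟩, (mem_normalizer_zpowers_iff hx).1 hg⟩
    obtain ⟨⟨h, hh, he⟩, -⟩ := hmem
    exact mem_of_conj_eq_conj hc hh he.symm

/-- For `x ∈ A_n` with `C_{S_n}(x) ⊆ A_n`: the normalizer `N_{S_n}(⟨x⟩)` is contained in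
`A_n` if and only if `cl_{A_n}(x) ∩ ⟨x⟩ = cl_{S_n}(x) ∩ ⟨x⟩`. -/
theorem normalizer_le_alternating_iff_classes_agree (n : ℕ) (x : Equiv.Perm (Fin n))
    (hx : x ∈ alternatingGroup (Fin n))
    (hc : Subgroup.centralizer {x} ≤ alternatingGroup (Fin n)) :
    (Subgroup.normalizer (Subgroup.zpowers x) ≤ alternatingGroup (Fin n)) ↔
      ({y | ∃ g ∈ alternatingGroup (Fin n), g * x * g⁻¹ = y} ∩
          {y | y ∈ Subgroup.zpowers x} =
        {y : Equiv.Perm (Fin n) | ∃ g, g * x * g⁻¹ = y} ∩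
          {y | y ∈ Subgroup.zpowers x}) :=
  normalizer_le_alternating_iff_classes_agree_general n x hc
end

section
/- For every even natural number n ≥ 12 with n ≠ 18, the partition z defined as follows belongs to no imprimitive wreath product S_t ≀ S_{n/t} (t a nontrivial divisor of n): if n ≡ 0 (mod 4), z = (1^{n/2 - 1}, n/2 + 1); if n = 2p with p ≥ 7 prime, z = (1^{n/2 - 6}, 2, 3, n/2 + 1). Moreover, in both cases every integer i with 1 ≤ i < n/2 is a partial sum of z. -/
/-!
If `g` preserves a system of blocks of size `t`, a cycle of `g` through a point whose block is
fixed stays inside that block, so it has length at most `t`.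

When `4 ∣ n`, the `(n/2+1)`-cycle is longer than a block, so it only meets moved blocks; these
contain no fixed point, hence the support of `g` is a union of blocks and `t ∣ n/2 + 1`.
Together with `t ∣ n` this gives `t = 2`, but `n/2 + 1` is odd.

When `n = 2p`, either `t = p` or `t = 2`. For `t = p` there are two blocks and a fixed point of
`g` fixes one of them, hence both, so the `(p+1)`-cycle would fit in a block of size `p`. For
`t = 2` the `3`-cycle moves its blocks, and the other point `y` of the block of one of its points
satisfies `g³ y = y` without lying on the `3`-cycle: `g` would have a second `3`-cycle.

The partial sums are made of `1`s, together with the parts `2` and `3` in the second case.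
-/

open Equiv Equiv.Perm Finset Function

theorem Function.Semiconj.perm_pow_apply {α β : Type*} {g : Perm α} {B : α → β} {gB : Perm β}
    (hB : Semiconj B g gB) (k : ℕ) (x : α) : B ((g ^ k) x) = (gB ^ k) (B x) := by
  simpa only [coe_pow] using hB.iterate_right k x

variable {α β : Type*} [Fintype α] [DecidableEq α]

namespace Equiv.Perm

variable {g : Perm α} {x y : α}

theorem pow_apply_eq_self_iff_card_support_cycleOf_dvd (hx : x ∈ g.support) {n : ℕ} :
    (g ^ n) x = x ↔ #(g.cycleOf x).support ∣ n :=
  (isCycleOn_support_cycleOf g x).pow_apply_eq (mem_support_cycleOf_iff.mpr ⟨.refl _ _, hx⟩)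

theorem card_support_cycleOf_eq_of_pow_apply_eq_self {q : ℕ} (hq : q.Prime) (hx : x ∈ g.support)
    (h : (g ^ q) x = x) : #(g.cycleOf x).support = q := by
  have h2 := two_le_card_support_cycleOf_iff.mpr (mem_support.mp hx)
  have := (Nat.dvd_prime hq).mp ((pow_apply_eq_self_iff_card_support_cycleOf_dvd hx).mp h)
  omega

theorem card_support_cycleOf_mem_cycleType (hx : x ∈ g.support) :
    #(g.cycleOf x).support ∈ g.cycleType :=
  Multiset.mem_map.mpr ⟨g.cycleOf x, cycleOf_mem_cycleFactorsFinset_iff.mpr hx, rfl⟩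

theorem exists_card_support_cycleOf_eq_of_mem_cycleType {ℓ : ℕ} (h : ℓ ∈ g.cycleType) :
    ∃ x ∈ g.support, #(g.cycleOf x).support = ℓ := by
  obtain ⟨c, hc, rfl⟩ := Multiset.mem_map.mp h
  have hc : c ∈ g.cycleFactorsFinset := hc
  obtain ⟨x, hx⟩ := (mem_cycleFactorsFinset_iff.mp hc).1.nonempty_support
  exact ⟨x, mem_cycleFactorsFinset_support_le hc hx, by rw [← cycle_is_cycleOf hx hc]; rfl⟩

theorem one_lt_count_cycleType {ℓ : ℕ} (hx : x ∈ g.support) (hy : y ∈ g.support)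
    (hxy : ¬ g.SameCycle x y) (hℓx : #(g.cycleOf x).support = ℓ)
    (hℓy : #(g.cycleOf y).support = ℓ) : 1 < g.cycleType.count ℓ := by
  rw [CycleType.count_def, Fintype.one_lt_card_iff]
  refine ⟨⟨⟨g.cycleOf x, cycleOf_mem_cycleFactorsFinset_iff.mpr hx⟩, hℓx⟩,
    ⟨⟨g.cycleOf y, cycleOf_mem_cycleFactorsFinset_iff.mpr hy⟩, hℓy⟩, ?_⟩
  simpa [← sameCycle_iff_cycleOf_eq_of_mem_support hx hy] using hxy

theorem eq_one_of_card_eq_two [Fintype β] [DecidableEq β] {σ : Perm β} {b : β}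
    (hβ : Fintype.card β = 2) (hb : σ b = b) : σ = 1 := by
  have hle : #σ.support ≤ 1 :=
    calc #σ.support ≤ #(univ.erase b) :=
          card_le_card fun c hc => mem_erase.mpr ⟨fun h => mem_support.mp hc (h ▸ hb), mem_univ c⟩
      _ = 1 := by rw [card_erase_of_mem (mem_univ b), card_univ, hβ]
  have := σ.card_support_ne_one
  exact support_eq_empty_iff.mp (card_eq_zero.mp (by omega))

end Equiv.Perm

theorem filter_two_le_add_replicate_one {s : Multiset ℕ} (hs : ∀ a ∈ s, 2 ≤ a) (m : ℕ) :
    (s + Multiset.replicate m 1).filter (2 ≤ ·) = s := by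
  rw [Multiset.filter_add, Multiset.filter_eq_self.mpr hs,
    Multiset.filter_eq_nil.mpr fun a ha => by rw [Multiset.eq_of_mem_replicate ha]; omega,
    add_zero]

theorem cycleType_eq_of_fullCycleType_eq {g : Perm α} {s : Multiset ℕ} {m : ℕ}
    (hg : fullCycleType g = s + Multiset.replicate m 1) (hs : ∀ a ∈ s, 2 ≤ a) :
    g.cycleType = s ∧ Fintype.card {x // g x = x} = m := by
  have hct : g.cycleType = s := by
    rw [← filter_two_le_add_replicate_one hs m, ← hg, fullCycleType,
      filter_two_le_add_replicate_one fun _ => two_le_of_mem_cycleType]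
  refine ⟨hct, ?_⟩
  have hcard := congrArg Multiset.card hg
  rw [fullCycleType, hct, Multiset.card_add, Multiset.card_add, Multiset.card_replicate,
    Multiset.card_replicate] at hcard
  omega

section BlockSystem

variable [DecidableEq β] {g : Perm α} {B : α → β} {gB : Perm β} {t : ℕ} {x : α}

theorem support_cycleOf_subset_fiber (hB : Semiconj B g gB) (hx : gB (B x) = B x) :
    (g.cycleOf x).support ⊆ ({y | B y = B x} : Finset α) := by
  intro y hy
  obtain ⟨i, -, rfl⟩ := (mem_support_cycleOf_iff.mp hy).1.exists_pow_eq'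
  simp only [mem_filter, mem_univ, true_and]
  rw [hB.perm_pow_apply, pow_apply_eq_self_of_apply_eq_self hx]

variable (hB : Semiconj B g gB) (hfib : ∀ b, #{y | B y = b} = t)
include hB hfib

theorem card_support_cycleOf_le_of_fixes_block (hx : gB (B x) = B x) :
    #(g.cycleOf x).support ≤ t :=
  hfib (B x) ▸ card_le_card (support_cycleOf_subset_fiber hB hx)

theorem exists_moves_block_of_mem_cycleType {ℓ : ℕ} (hℓ : ℓ ∈ g.cycleType) (ht : t < ℓ) :
    ∃ x ∈ g.support, #(g.cycleOf x).support = ℓ ∧ gB (B x) ≠ B x := by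
  obtain ⟨x, hx, hxℓ⟩ := exists_card_support_cycleOf_eq_of_mem_cycleType hℓ
  refine ⟨x, hx, hxℓ, fun hfix => ?_⟩
  have := card_support_cycleOf_le_of_fixes_block hB hfib hfix
  omega

theorem dvd_card_support_of_moves_blocks (hmove : ∀ x ∈ g.support, gB (B x) ≠ B x) :
    t ∣ #g.support := by
  have hfiber : ∀ b ∈ g.support.image B,
      ({y ∈ g.support | B y = b} : Finset α) = ({y | B y = b} : Finset α) := by
    simp only [mem_image]
    rintro _ ⟨x, hx, rfl⟩
    ext y
    simp only [mem_filter, mem_univ, true_and, and_iff_right_iff_imp]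
    intro hy
    by_contra hgy
    apply hmove x hx
    rw [← hy, ← hB, notMem_support.mp hgy]
  rw [card_eq_sum_card_fiberwise fun x hx => mem_image_of_mem B hx,
    sum_congr rfl fun b hb => by rw [hfiber b hb, hfib], sum_const, smul_eq_mul]
  exact dvd_mul_left _ _

theorem dvd_of_cycleType_eq_singleton {ℓ : ℕ} (hg : g.cycleType = {ℓ}) (ht : t < ℓ) : t ∣ ℓ := by
  have hmove : ∀ x ∈ g.support, gB (B x) ≠ B x := fun x hx hfix => by
    have hℓ := card_support_cycleOf_mem_cycleType hx
    rw [hg, Multiset.mem_singleton] at hℓ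
    have := card_support_cycleOf_le_of_fixes_block hB hfib hfix
    omega
  simpa [← sum_cycleType, hg] using dvd_card_support_of_moves_blocks hB hfib hmove

theorem le_of_mem_cycleType_of_card_eq_two [Fintype β] (hβ : Fintype.card β = 2) {x₀ : α}
    (hfix : g x₀ = x₀) {ℓ : ℕ} (hℓ : ℓ ∈ g.cycleType) : ℓ ≤ t := by
  by_contra! ht
  obtain ⟨x, -, -, hmove⟩ := exists_moves_block_of_mem_cycleType hB hfib hℓ ht
  have hgB : gB = 1 := eq_one_of_card_eq_two hβ (show gB (B x₀) = B x₀ by rw [← hB, hfix])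
  exact hmove (by rw [hgB, one_apply])

omit hfib in
theorem exists_not_sameCycle_card_support_cycleOf_eq [Fintype β]
    (hfib : ∀ b, #{y | B y = b} = 2) {q : ℕ} (hq : q.Prime) (hx : x ∈ g.support)
    (hxq : #(g.cycleOf x).support = q) (hmove : gB (B x) ≠ B x) :
    ∃ y ∈ g.support, ¬ g.SameCycle x y ∧ #(g.cycleOf y).support = q := by
  have hxF : x ∈ ({z | B z = B x} : Finset α) := by simp
  obtain ⟨y, hyF, hyx⟩ :=
    exists_mem_ne (s := ({z | B z = B x} : Finset α)) (by rw [hfib]; norm_num) x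
  have hBy : B y = B x := (mem_filter.mp hyF).2
  have hF : ({z | B z = B x} : Finset α) = {x, y} :=
    (eq_of_subset_of_card_le (insert_subset hxF (singleton_subset_iff.mpr hyF))
      (by rw [hfib, card_pair hyx.symm])).symm
  have hgq : (g ^ q) x = x := (pow_apply_eq_self_iff_card_support_cycleOf_dvd hx).mpr hxq.dvd
  have hgBq : (gB ^ q) (B x) = B x := by rw [← hB.perm_pow_apply, hgq]
  have hy : y ∈ g.support := mem_support.mpr fun h => hmove (by rw [← hBy, ← hB, h])
  -- `(g ^ q) y` stays in the block `{x, y}` and cannot be `x = (g ^ q) x`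
  have hgqy : (g ^ q) y = y := by
    have hmem : (g ^ q) y ∈ ({z | B z = B x} : Finset α) := by
      simp [hB.perm_pow_apply, hBy, hgBq]
    rw [hF, mem_insert, mem_singleton, ← hgq] at hmem
    exact hmem.resolve_left fun h => hyx ((g ^ q).injective h)
  refine ⟨y, hy, fun hxy => ?_, card_support_cycleOf_eq_of_pow_apply_eq_self hq hy hgqy⟩
  obtain ⟨i, hi, rfl⟩ := hxy.exists_pow_eq_of_mem_support hx
  have hBx : B x ∈ gB.support := mem_support.mpr hmove
  have hqi : q ∣ i := by
    rw [← card_support_cycleOf_eq_of_pow_apply_eq_self hq hBx hgBq,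
      ← pow_apply_eq_self_iff_card_support_cycleOf_dvd hBx, ← hB.perm_pow_apply, hBy]
  obtain rfl : i = 0 := Nat.eq_zero_of_dvd_of_lt hqi (hxq ▸ hi)
  exact hyx (by simp)

omit hfib in
theorem one_lt_count_cycleType_of_blocks_card_two [Fintype β]
    (hfib : ∀ b, #{y | B y = b} = 2) {q : ℕ} (hq : q.Prime) (hq2 : q ≠ 2)
    (hmem : q ∈ g.cycleType) : 1 < g.cycleType.count q := by
  obtain ⟨x, hx, hxq, hmove⟩ :=
    exists_moves_block_of_mem_cycleType hB hfib hmem (hq.two_le.lt_of_ne' hq2)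
  obtain ⟨y, hy, hxy, hyq⟩ := exists_not_sameCycle_card_support_cycleOf_eq hB hfib hq hx hxq hmove
  exact one_lt_count_cycleType hx hy hxy hxq hyq

end BlockSystem

section

variable {B : α → β} {gB : Perm β} {t n p : ℕ} {g : Perm α} [DecidableEq β]

theorem fullCycleType_ne_of_four_dvd (hB : Semiconj B g gB) (hfib : ∀ b, #{y | B y = b} = t)
    (h4 : n % 4 = 0) (ht : t ∣ n) (ht1 : 1 < t) (htn : t < n) :
    fullCycleType g ≠ (n / 2 + 1) ::ₘ Multiset.replicate (n / 2 - 1) 1 := by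
  intro hg
  have hct := (cycleType_eq_of_fullCycleType_eq (s := {n / 2 + 1}) hg (by simp; omega)).1
  have hlt : t < n / 2 + 1 := by
    obtain ⟨k, rfl⟩ := ht
    have hk : 2 ≤ k := by
      by_contra
      interval_cases k <;> omega
    have := Nat.mul_le_mul_left t hk
    omega
  have hdvd := dvd_of_cycleType_eq_singleton hB hfib hct hlt
  have h2 : t ∣ 2 := by
    simpa [show 2 * (n / 2 + 1) - n = 2 by omega] using Nat.dvd_sub (hdvd.mul_left 2) ht
  obtain rfl : t = 2 := le_antisymm (Nat.le_of_dvd two_pos h2) ht1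
  omega

theorem eq_two_or_eq_of_dvd_two_mul_prime (hp : p.Prime) (ht : t ∣ 2 * p) (ht1 : 1 < t)
    (htn : t < 2 * p) : t = 2 ∨ t = p := by
  obtain ⟨a, b, ha, hb, rfl⟩ := Nat.dvd_mul.mp ht
  rcases (Nat.dvd_prime Nat.prime_two).mp ha with rfl | rfl <;>
    rcases (Nat.dvd_prime hp).mp hb with rfl | rfl <;> simp_all

theorem fullCycleType_ne_of_two_mul_prime [Fintype β] (hB : Semiconj B g gB)
    (hfib : ∀ b, #{y | B y = b} = t) (hβ : Fintype.card β * t = 2 * p) (hp : p.Prime)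
    (hp7 : 7 ≤ p) (ht : t ∣ 2 * p) (ht1 : 1 < t) (htn : t < 2 * p) :
    fullCycleType g ≠ (p + 1) ::ₘ 3 ::ₘ 2 ::ₘ Multiset.replicate (p - 6) 1 := by
  intro hg
  obtain ⟨hct, hfix⟩ := cycleType_eq_of_fullCycleType_eq (s := {p + 1, 3, 2}) hg
    (by simp; omega)
  rcases eq_two_or_eq_of_dvd_two_mul_prime hp ht ht1 htn with rfl | htp
  · have := one_lt_count_cycleType_of_blocks_card_two hB hfib Nat.prime_three (by norm_num)
      (by simp [hct])
    simp [hct, show p ≠ 2 by omega] at this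
  · rw [htp] at hfib hβ
    obtain ⟨⟨x₀, hx₀⟩⟩ := Fintype.card_pos_iff.mp (show 0 < Fintype.card {x // g x = x} by omega)
    have := le_of_mem_cycleType_of_card_eq_two hB hfib
      (Nat.eq_of_mul_eq_mul_right hp.pos hβ) hx₀ (by simp [hct] : p + 1 ∈ g.cycleType)
    omega

end

theorem IsPartialSum.mono {z z' : Multiset ℕ} {k : ℕ} (h : IsPartialSum z k) (hz : z ≤ z') :
    IsPartialSum z' k :=
  let ⟨s, hs, hsum⟩ := h
  ⟨s, hs.trans hz, hsum⟩

theorem IsPartialSum.cons {z : Multiset ℕ} {k : ℕ} (h : IsPartialSum z k) (a : ℕ) :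
    IsPartialSum (a ::ₘ z) (a + k) :=
  let ⟨s, hs, hsum⟩ := h
  ⟨a ::ₘ s, Multiset.cons_le_cons a hs, by rw [Multiset.sum_cons, hsum]⟩

theorem isPartialSum_replicate_one {k m : ℕ} (h : k ≤ m) :
    IsPartialSum (Multiset.replicate m 1) k :=
  ⟨Multiset.replicate k 1, (Multiset.replicate_le_replicate 1).mpr h, by simp⟩

theorem isPartialSum_three_two_replicate_one {k m : ℕ} (hm : 1 ≤ m) (hk : k ≤ m + 5) :
    IsPartialSum (3 ::ₘ 2 ::ₘ Multiset.replicate m 1) k := by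
  have hle : ∀ a (z : Multiset ℕ), z ≤ a ::ₘ z := fun a z => Multiset.le_cons_self z a
  by_cases h0 : k ≤ m
  · exact ((isPartialSum_replicate_one h0).mono (hle 2 _)).mono (hle 3 _)
  by_cases h5 : 5 ≤ k
  · simpa [show 3 + (2 + (k - 5)) = k by omega] using
      ((isPartialSum_replicate_one (show k - 5 ≤ m by omega)).cons 2).cons 3
  by_cases h2 : k ≤ m + 2
  · simpa [show 2 + (k - 2) = k by omega] using
      ((isPartialSum_replicate_one (show k - 2 ≤ m by omega)).cons 2).mono (hle 3 _)
  · simpa [show 3 + (k - 3) = k by omega] using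
      ((isPartialSum_replicate_one (show k - 3 ≤ m by omega)).mono (hle 2 _)).cons 3

theorem vertex_connected_only_to_n_cycle_general (n : ℕ) (z : Multiset ℕ)
    (hz : (n % 4 = 0 ∧ z = (n / 2 + 1) ::ₘ Multiset.replicate (n / 2 - 1) 1) ∨
      (∃ p, Nat.Prime p ∧ 7 ≤ p ∧ n = 2 * p ∧
        z = (n / 2 + 1) ::ₘ 3 ::ₘ 2 ::ₘ Multiset.replicate (n / 2 - 6) 1)) :
    (∀ t, t ∣ n → 1 < t → t < n →
      ¬ ∃ (g : Equiv.Perm (Fin n)) (B : Fin n → Fin (n / t))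
          (gB : Equiv.Perm (Fin (n / t))),
          (∀ j, Fintype.card {x // B x = j} = t) ∧ (∀ x, B (g x) = gB (B x)) ∧
          fullCycleType g = z) ∧
    (∀ i, 1 ≤ i → i < n / 2 → IsPartialSum z i) := by
  refine ⟨fun t ht ht1 htn ⟨g, B, gB, hfib, hB, hg⟩ => ?_, fun i _ hi => ?_⟩
  · replace hfib : ∀ b, #{x | B x = b} = t :=
      fun b => (Fintype.card_subtype _).symm.trans (hfib b)
    rcases hz with ⟨h4, rfl⟩ | ⟨p, hp, hp7, rfl, rfl⟩
    · exact fullCycleType_ne_of_four_dvd hB hfib h4 ht ht1 htn hg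
    · rw [Nat.mul_div_cancel_left p two_pos] at hg
      exact fullCycleType_ne_of_two_mul_prime hB hfib
        (by rw [Fintype.card_fin, Nat.div_mul_cancel ht]) hp hp7 ht ht1 htn hg
  · rcases hz with ⟨-, rfl⟩ | ⟨p, -, hp7, rfl, rfl⟩
    · exact (isPartialSum_replicate_one (by omega)).mono (Multiset.le_cons_self _ _)
    · exact (isPartialSum_three_two_replicate_one (by omega) (by omega)).mono
        (Multiset.le_cons_self _ _)

/-- For even `n ≥ 12`, `n ≠ 18`, the partition `z = (1^{n/2-1}, n/2+1)` (if `4 ∣ n`) or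
`z = (1^{n/2-6}, 2, 3, n/2+1)` (if `n = 2p`, `p ≥ 7` prime) belongs to no imprimitive
wreath product `S_t ≀ S_{n/t}`, and every `1 ≤ i < n/2` is a partial sum of `z`. -/
theorem vertex_connected_only_to_n_cycle (n : ℕ) (hn : Even n) (h12 : 12 ≤ n)
    (h18 : n ≠ 18) (z : Multiset ℕ)
    (hz : (n % 4 = 0 ∧ z = (n / 2 + 1) ::ₘ Multiset.replicate (n / 2 - 1) 1) ∨
      (∃ p, Nat.Prime p ∧ 7 ≤ p ∧ n = 2 * p ∧
        z = (n / 2 + 1) ::ₘ 3 ::ₘ 2 ::ₘ Multiset.replicate (n / 2 - 6) 1)) :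
    (∀ t, t ∣ n → 1 < t → t < n →
      ¬ ∃ (g : Equiv.Perm (Fin n)) (B : Fin n → Fin (n / t))
          (gB : Equiv.Perm (Fin (n / t))),
          (∀ j, Fintype.card {x // B x = j} = t) ∧ (∀ x, B (g x) = gB (B x)) ∧
          fullCycleType g = z) ∧
    (∀ i, 1 ≤ i → i < n / 2 → IsPartialSum z i) :=
  vertex_connected_only_to_n_cycle_general n z hz
end

section
/- Let n ≥ 11 be odd and define w = (2^{(n-3)/2}, 3) if n ≡ 3 (mod 4) and w = (2^{(n-9)/2}, 3^3) if n ≡ 1 (mod 4). Then w is a partition of n into parts defining an even permutation of S_n, and every integer i with 2 ≤ i ≤ (n-1)/2 is a partial sum of w, while 1 is not a partial sum of w. -/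
/-! Write `w = 2^a 3^b`. The sign exponent `n + (a + b) = 3a + 4b` is even because `a` is,
no part equals `1`, and `i` is a partial sum whenever `i = 2x + 3y` with `x ≤ a`, `y ≤ b`;
below `(n - 1) / 2` this needs at most two threes. -/

open Multiset

section Sign

variable {α : Type*} [Fintype α] [DecidableEq α]

/-- Each fixed point adds `1 + 1` to the exponent, so it does not change the sign. -/
theorem sign_eq_neg_one_pow_fullCycleType (g : Equiv.Perm α) :
    Equiv.Perm.sign g = (-1) ^ ((fullCycleType g).sum + card (fullCycleType g)) := by
  rw [Equiv.Perm.sign_of_cycleType, fullCycleType, sum_add, card_add, sum_replicate,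
    card_replicate, smul_eq_mul, mul_one,
    show ∀ s c m : ℕ, s + m + (c + m) = s + c + 2 * m by intros; ring]
  simp [pow_add, pow_mul]

theorem mem_alternatingGroup_iff_even_fullCycleType (g : Equiv.Perm α) :
    g ∈ alternatingGroup α ↔ Even ((fullCycleType g).sum + card (fullCycleType g)) := by
  rw [Equiv.Perm.mem_alternatingGroup, sign_eq_neg_one_pow_fullCycleType]
  exact neg_one_pow_eq_one_iff_even (by decide)

end Sign

section PartialSum

theorem not_isPartialSum_of_forall_lt {z : Multiset ℕ} {k : ℕ} (hk : 0 < k)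
    (h : ∀ a ∈ z, k < a) : ¬ IsPartialSum z k := by
  rintro ⟨s, hsz, rfl⟩
  obtain ⟨a, ha⟩ := exists_mem_of_ne_zero (fun hs : s = 0 => by simp [hs] at hk)
  exact (h a (mem_of_le hsz ha)).not_ge (le_sum_of_mem ha)

theorem isPartialSum_replicate_add_replicate {a b x y : ℕ} (p q : ℕ) (hx : x ≤ a)
    (hy : y ≤ b) : IsPartialSum (replicate a p + replicate b q) (x * p + y * q) :=
  ⟨replicate x p + replicate y q,
    add_le_add ((replicate_le_replicate p).2 hx) ((replicate_le_replicate q).2 hy),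
    by simp⟩

variable {a b i : ℕ}

theorem sum_twos_threes : (replicate a 2 + replicate b 3).sum = 2 * a + 3 * b := by
  simp only [sum_add, sum_replicate, smul_eq_mul]
  ring

theorem even_sum_add_card_twos_threes_iff :
    Even ((replicate a 2 + replicate b 3).sum + card (replicate a 2 + replicate b 3)) ↔
      Even a := by
  rw [sum_twos_threes, card_add, card_replicate, card_replicate,
    show 2 * a + 3 * b + (a + b) = a + 2 * (a + 2 * b) by ring]
  simp [Nat.even_add]

theorem isPartialSum_twos_threes_of_le_two_mul_add_one (hb : 1 ≤ b) (hi₂ : 2 ≤ i)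
    (hi : i ≤ 2 * a + 1) : IsPartialSum (replicate a 2 + replicate b 3) i := by
  obtain ⟨x, rfl | rfl⟩ := Nat.even_or_odd' i
  · convert isPartialSum_replicate_add_replicate 2 3 (show x ≤ a by omega) b.zero_le using 1
    omega
  · convert isPartialSum_replicate_add_replicate 2 3 (show x - 1 ≤ a by omega) hb using 1
    omega

theorem isPartialSum_twos_threes_of_le_two_mul_add_three (ha : 2 ≤ a) (hb : 2 ≤ b)
    (hi₂ : 2 ≤ i) (hi : i ≤ 2 * a + 3) : IsPartialSum (replicate a 2 + replicate b 3) i := by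
  obtain hi | rfl | rfl : i ≤ 2 * a + 1 ∨ i = 2 * a + 2 ∨ i = 2 * a + 3 := by omega
  · exact isPartialSum_twos_threes_of_le_two_mul_add_one (by omega) hi₂ hi
  · convert isPartialSum_replicate_add_replicate 2 3 (show a - 2 ≤ a by omega) hb using 1
    omega
  · convert isPartialSum_replicate_add_replicate 2 3 le_rfl (show 1 ≤ b by omega) using 1
    omega

end PartialSum

/-- For odd `n ≥ 11`, the partition `w = (2^{(n-3)/2}, 3)` if `n ≡ 3 (mod 4)` and
`w = (2^{(n-9)/2}, 3^3)` if `n ≡ 1 (mod 4)` is a partition of `n` whose permutations are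
even, every `2 ≤ i ≤ (n-1)/2` is a partial sum of `w`, and `1` is not. -/
theorem vertex_connected_only_to_one_nminusone (n : ℕ) (hn : 11 ≤ n) (hodd : Odd n)
    (w : Multiset ℕ)
    (hw : w = if n % 4 = 3 then 3 ::ₘ Multiset.replicate ((n - 3) / 2) 2
      else 3 ::ₘ 3 ::ₘ 3 ::ₘ Multiset.replicate ((n - 9) / 2) 2) :
    (∀ a ∈ w, 0 < a) ∧ w.sum = n ∧
    (∀ g : Equiv.Perm (Fin n), fullCycleType g = w → g ∈ alternatingGroup (Fin n)) ∧
    (∀ i, 2 ≤ i → i ≤ (n - 1) / 2 → IsPartialSum w i) ∧ ¬ IsPartialSum w 1 := by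
  -- The second alternative is forced by `n = 13`, where `6 = 3 + 3` exceeds `2 * a + 1 = 5`.
  obtain ⟨a, b, rfl, hab, ha, hcover⟩ : ∃ a b, w = replicate a 2 + replicate b 3 ∧
      2 * a + 3 * b = n ∧ Even a ∧
      (1 ≤ b ∧ (n - 1) / 2 ≤ 2 * a + 1 ∨ 2 ≤ a ∧ 2 ≤ b ∧ (n - 1) / 2 ≤ 2 * a + 3) := by
    have := Nat.odd_iff.1 hodd
    obtain h | h : n % 4 = 3 ∨ n % 4 = 1 := by omega
    · refine ⟨(n - 3) / 2, 1, ?_, by omega, Nat.even_iff.2 (by omega),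
        Or.inl ⟨le_rfl, by omega⟩⟩
      rw [hw, if_pos h, add_comm, replicate_one, singleton_add]
    · refine ⟨(n - 9) / 2, 3, ?_, by omega, Nat.even_iff.2 (by omega),
        Or.inr ⟨by omega, by omega, by omega⟩⟩
      simp [hw, show n % 4 ≠ 3 by omega, add_comm (replicate _ 2), replicate_succ]
  have hparts : ∀ x ∈ replicate a 2 + replicate b 3, 1 < x := by
    simp only [mem_add, mem_replicate]
    omega
  refine ⟨fun x hx => (hparts x hx).pos, sum_twos_threes.trans hab, fun g hg => ?_,
    fun i hi₂ hi => ?_, not_isPartialSum_of_forall_lt one_pos hparts⟩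
  · rw [mem_alternatingGroup_iff_even_fullCycleType, hg]
    exact even_sum_add_card_twos_threes_iff.2 ha
  · rcases hcover with ⟨hb, h⟩ | ⟨ha₂, hb, h⟩
    · exact isPartialSum_twos_threes_of_le_two_mul_add_one hb hi₂ (hi.trans h)
    · exact isPartialSum_twos_threes_of_le_two_mul_add_three ha₂ hb hi₂ (hi.trans h)
end
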